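/- arXiv:1212.2076 — 11 statements merged into one kernel-verified Lean document; each statement's English description precedes it below -/
import Mathlib

section
/- Let p : (0,1) → [1,∞) be nondecreasing with p(1) < ∞, and suppose there is a constant C > 0 such that for all a ∈ (0,1), ∫_a^1 (a^{1/p'(a)} · x^{-1/p'(x)})^{p(x)} dx/x ≤ C, where p'(x) is the Hölder conjugate of p(x) (with 1/p'(x) = 1 - 1/p(x)). Then there exists a constant C₁ > 0, depending only on C and p(1), such that |1/p'(2x) - 1/p'(x)| · ln(1/x) ≤ C₁ for all x ∈ (0, 1/2). -/
open MeasureTheory Set Real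

/-!
Write `D = 1/p(x) - 1/p(2x) ≥ 0`, so that the quantity to bound is `log (x ^ (-D))`. For
`t ∈ (2x, 4x]` monotonicity of `p` gives `t ^ (-1/p'(t)) ≥ (4x) ^ (-1/p'(2x))`, so the base of
the integrand with `a = x` is at least `x ^ (-D) / 4`. When this is `≥ 1` the exponent `p(t) ≥ 1`
only increases it, and integrating `dt/t` over `(2x, 4x]` gives `x ^ (-D) / 8 ≤ C`. Hence
`x ^ (-D) ≤ max (8C) 4` for `x ≤ 1/4` (so that `(2x, 4x] ⊆ (x, 1]`), while for `x > 1/4`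
simply `x ^ (-D) ≤ 1/x < 4`.
-/

noncomputable def modularIntegrand (p : ℝ → ℝ) (a t : ℝ) : ℝ :=
  (a ^ (1 - 1 / p a) * t ^ (-(1 - 1 / p t))) ^ p t / t

lemma rpow_sub_div_four_le_mul_rpow_neg {x t a b c : ℝ} (hx : 0 < x) (ht : 0 < t) (ht1 : t ≤ 1)
    (ht4 : t ≤ 4 * x) (hb0 : 0 ≤ b) (hb1 : b ≤ 1) (hbc : b ≤ c) :
    x ^ (a - b) / 4 ≤ x ^ a * t ^ (-c) := by
  have h4 : (1 : ℝ) / 4 ≤ 4 ^ (-b) :=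
    calc (1 : ℝ) / 4 = 4 ^ (-1 : ℝ) := by norm_num [rpow_neg_one]
      _ ≤ 4 ^ (-b) := rpow_le_rpow_of_exponent_le (by norm_num) (by linarith)
  calc x ^ (a - b) / 4 = x ^ a * (1 / 4 * x ^ (-b)) := by rw [sub_eq_add_neg, rpow_add hx]; ring
    _ ≤ x ^ a * (4 ^ (-b) * x ^ (-b)) := by gcongr
    _ = x ^ a * (4 * x) ^ (-b) := by rw [mul_rpow (by norm_num) hx.le]
    _ ≤ x ^ a * t ^ (-b) := by gcongr x ^ a * ?_; exact rpow_le_rpow_of_nonpos ht ht4 (by linarith)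
    _ ≤ x ^ a * t ^ (-c) := by
        gcongr x ^ a * ?_; exact rpow_le_rpow_of_exponent_ge ht ht1 (by linarith)

section

variable {p : ℝ → ℝ}

lemma modularIntegrand_nonneg {a t : ℝ} (ha : 0 < a) (ht : 0 < t) :
    0 ≤ modularIntegrand p a t := by
  unfold modularIntegrand; positivity

lemma modularIntegrand_le {a t : ℝ} (ha : 0 < a) (ha1 : a ≤ 1) (hat : a < t) (ht1 : t ≤ 1)
    (hpa : 1 ≤ p a) (hpt : 0 < p t) (hpt1 : p t ≤ p 1) :
    modularIntegrand p a t ≤ (1 / a) ^ p 1 * (1 / a) := by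
  have ht : 0 < t := ha.trans hat
  have hbase : a ^ (1 - 1 / p a) * t ^ (-(1 - 1 / p t)) ≤ 1 / a :=
    calc a ^ (1 - 1 / p a) * t ^ (-(1 - 1 / p t)) ≤ 1 * t ^ (-1 : ℝ) := by
          refine mul_le_mul ?_ ?_ (by positivity) zero_le_one
          · exact rpow_le_one ha.le ha1 (by rw [sub_nonneg, div_le_one (by linarith)]; exact hpa)
          · exact rpow_le_rpow_of_exponent_ge ht ht1 (by have := one_div_pos.2 hpt; linarith)
      _ ≤ 1 / a := by rw [one_mul, rpow_neg_one, ← one_div]; gcongr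
  have h1a : 1 ≤ 1 / a := by rw [le_div_iff₀ ha]; linarith
  calc modularIntegrand p a t ≤ (1 / a) ^ p t / t := by
        unfold modularIntegrand; gcongr
    _ ≤ (1 / a) ^ p 1 * (1 / a) := by
        rw [div_eq_mul_one_div]
        gcongr

lemma rpow_div_le_modularIntegrand {x s t : ℝ} (hx : 0 < x) (ht : 0 < t) (ht1 : t ≤ 1)
    (ht4 : t ≤ 4 * x) (hps : 1 ≤ p s) (hpst : p s ≤ p t)
    (hB : 4 ≤ x ^ ((1 - 1 / p x) - (1 - 1 / p s))) :
    x ^ ((1 - 1 / p x) - (1 - 1 / p s)) / (16 * x) ≤ modularIntegrand p x t := by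
  set B := x ^ ((1 - 1 / p x) - (1 - 1 / p s))
  have hinv : 1 / p t ≤ 1 / p s := one_div_le_one_div_of_le (by linarith) hpst
  have hinv1 : 1 / p s ≤ 1 := by rw [div_le_one (by linarith)]; exact hps
  have hbase : B / 4 ≤ x ^ (1 - 1 / p x) * t ^ (-(1 - 1 / p t)) :=
    rpow_sub_div_four_le_mul_rpow_neg hx ht ht1 ht4 (by linarith)
      (by linarith [one_div_pos.2 (zero_lt_one.trans_le hps)]) (by linarith)
  have hnum : B / 4 ≤ (x ^ (1 - 1 / p x) * t ^ (-(1 - 1 / p t))) ^ p t :=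
    calc B / 4 ≤ (B / 4) ^ p t := self_le_rpow_of_one_le (by linarith) (by linarith)
      _ ≤ _ := rpow_le_rpow (by linarith) hbase (by linarith)
  calc B / (16 * x) = B / 4 / (4 * x) := by ring
    _ ≤ B / 4 / t := by gcongr
    _ ≤ modularIntegrand p x t := by unfold modularIntegrand; gcongr

variable (hmono : MonotoneOn p (Ioc 0 1)) (hp1 : ∀ x ∈ Ioc (0 : ℝ) 1, 1 ≤ p x)
include hmono hp1

lemma integrableOn_modularIntegrand {a : ℝ} (ha : 0 < a) (ha1 : a ≤ 1) :
    IntegrableOn (modularIntegrand p a) (Ioc a 1) := by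
  have hp : AEMeasurable p (volume.restrict (Ioc a 1)) :=
    aemeasurable_restrict_of_monotoneOn measurableSet_Ioc (hmono.mono (Ioc_subset_Ioc_left ha.le))
  have hmeas : AEMeasurable (modularIntegrand p a) (volume.restrict (Ioc a 1)) := by
    unfold modularIntegrand; fun_prop
  refine Integrable.mono' (g := fun _ => (1 / a) ^ p 1 * (1 / a))
    (integrableOn_const measure_Ioc_lt_top.ne) hmeas.aestronglyMeasurable ?_
  filter_upwards [ae_restrict_mem measurableSet_Ioc] with t ht
  have ht0 : 0 < t := ha.trans ht.1
  rw [norm_of_nonneg (modularIntegrand_nonneg ha ht0)]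
  exact modularIntegrand_le ha ha1 ht.1 ht.2 (hp1 a ⟨ha, ha1⟩) (by linarith [hp1 t ⟨ht0, ht.2⟩])
    (hmono ⟨ht0, ht.2⟩ ⟨one_pos, le_rfl⟩ ht.2)

lemma rpow_div_eight_le_setIntegral_modularIntegrand {x : ℝ} (hx : 0 < x) (hx4 : x ≤ 1 / 4)
    (hB : 4 ≤ x ^ ((1 - 1 / p x) - (1 - 1 / p (2 * x)))) :
    x ^ ((1 - 1 / p x) - (1 - 1 / p (2 * x))) / 8 ≤ ∫ t in Ioc x 1, modularIntegrand p x t := by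
  set B := x ^ ((1 - 1 / p x) - (1 - 1 / p (2 * x)))
  have hsub : Ioc (2 * x) (4 * x) ⊆ Ioc x 1 := Ioc_subset_Ioc (by linarith) (by linarith)
  have hf := integrableOn_modularIntegrand hmono hp1 hx (by linarith)
  have hlower : ∀ t ∈ Ioc (2 * x) (4 * x), B / (16 * x) ≤ modularIntegrand p x t := by
    intro t ht
    have ht0 : 0 < t := by linarith [ht.1]
    have h2x : 2 * x ∈ Ioc (0 : ℝ) 1 := ⟨by linarith, by linarith⟩
    exact rpow_div_le_modularIntegrand hx ht0 (hsub ht).2 ht.2 (hp1 _ h2x)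
      (hmono h2x ⟨ht0, (hsub ht).2⟩ ht.1.le) hB
  calc B / 8 = B / (16 * x) * volume.real (Ioc (2 * x) (4 * x)) := by
        rw [volume_real_Ioc_of_le (by linarith)]; field_simp; ring
    _ ≤ ∫ t in Ioc (2 * x) (4 * x), modularIntegrand p x t :=
        setIntegral_ge_of_const_le_real measurableSet_Ioc measure_Ioc_lt_top.ne hlower
          (hf.mono_set hsub)
    _ ≤ ∫ t in Ioc x 1, modularIntegrand p x t :=
        setIntegral_mono_set hf
          (ae_restrict_of_forall_mem measurableSet_Ioc fun t ht =>
            modularIntegrand_nonneg hx (hx.trans ht.1))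
          hsub.eventuallyLE

lemma rpow_le_max_of_setIntegral_modularIntegrand_le {C : ℝ}
    (hint : ∀ a ∈ Ioo (0 : ℝ) 1, ∫ t in Ioc a 1, modularIntegrand p a t ≤ C)
    {x : ℝ} (hx : 0 < x) (hx2 : x < 1 / 2) :
    x ^ ((1 - 1 / p x) - (1 - 1 / p (2 * x))) ≤ max (8 * C) 4 := by
  rcases le_or_gt x (1 / 4) with hx4 | hx4
  · rcases le_or_gt (x ^ ((1 - 1 / p x) - (1 - 1 / p (2 * x)))) 4 with hB | hB
    · exact hB.trans (le_max_right _ _)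
    · have := rpow_div_eight_le_setIntegral_modularIntegrand hmono hp1 hx hx4 hB.le
      have := hint x ⟨hx, by linarith⟩
      exact le_max_of_le_left (by linarith)
  · have hpx := hp1 x ⟨hx, by linarith⟩
    have hp2x := hp1 (2 * x) ⟨by linarith, by linarith⟩
    have hinv : 0 ≤ 1 / p (2 * x) := by positivity
    have hinvx : 1 / p x ≤ 1 := by rw [div_le_one (by linarith)]; exact hpx
    calc x ^ ((1 - 1 / p x) - (1 - 1 / p (2 * x))) ≤ x ^ (-1 : ℝ) :=
          rpow_le_rpow_of_exponent_ge hx (by linarith) (by linarith)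
      _ ≤ max (8 * C) 4 := by
          rw [rpow_neg_one]; refine le_max_of_le_right ?_
          rw [inv_le_comm₀ hx (by norm_num)]; linarith

end

theorem stmt_0_general (p : ℝ → ℝ) (C : ℝ)
    (hmono : MonotoneOn p (Set.Ioc 0 1))
    (hp1 : ∀ x ∈ Set.Ioc (0:ℝ) 1, 1 ≤ p x)
    (hint : ∀ a ∈ Set.Ioo (0:ℝ) 1,
      ∫ x in Set.Ioc a 1,
        (a ^ (1 - 1 / p a) * x ^ (-(1 - 1 / p x))) ^ p x / x ≤ C) :
    ∃ C₁ > 0, ∀ x ∈ Set.Ioo (0:ℝ) (1/2),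
      |(1 - 1 / p (2 * x)) - (1 - 1 / p x)| * Real.log (1 / x) ≤ C₁ := by
  refine ⟨log (max (8 * C) 4), log_pos (lt_max_of_lt_right (by norm_num)), ?_⟩
  rintro x ⟨hx, hx2⟩
  have hx1 : x ∈ Ioc (0 : ℝ) 1 := ⟨hx, by linarith⟩
  have h2x : 2 * x ∈ Ioc (0 : ℝ) 1 := ⟨by linarith, by linarith⟩
  have hD : 0 ≤ (1 - 1 / p (2 * x)) - (1 - 1 / p x) := by
    have := one_div_le_one_div_of_le (by linarith [hp1 x hx1]) (hmono hx1 h2x (by linarith))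
    linarith
  calc |(1 - 1 / p (2 * x)) - (1 - 1 / p x)| * log (1 / x)
      = log (x ^ ((1 - 1 / p x) - (1 - 1 / p (2 * x)))) := by
        rw [abs_of_nonneg hD, log_rpow hx, one_div x, log_inv]; ring
    _ ≤ log (max (8 * C) 4) :=
        log_le_log (rpow_pos_of_pos hx _)
          (rpow_le_max_of_setIntegral_modularIntegrand_le hmono hp1 hint hx hx2)

/-- Lemma 3.1: the modular integral condition implies the log-Hölder type
condition on the conjugate exponent. -/
theorem stmt_0 (p : ℝ → ℝ) (C : ℝ)
    (hmono : MonotoneOn p (Set.Ioc 0 1))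
    (hp1 : ∀ x ∈ Set.Ioc (0:ℝ) 1, 1 ≤ p x)
    (hC : 0 < C)
    (hint : ∀ a ∈ Set.Ioo (0:ℝ) 1,
      ∫ x in Set.Ioc a 1,
        (a ^ (1 - 1 / p a) * x ^ (-(1 - 1 / p x))) ^ p x / x ≤ C) :
    ∃ C₁ > 0, ∀ x ∈ Set.Ioo (0:ℝ) (1/2),
      |(1 - 1 / p (2 * x)) - (1 - 1 / p x)| * Real.log (1 / x) ≤ C₁ :=
  stmt_0_general p C hmono hp1 hint
end

section
/- Let p : (0,1) → [1,∞) be nondecreasing with p(1) < ∞. Suppose there is C > 0 such that for all a ∈ (0,1), ∫_a^1 (a^{1/p'(a)} x^{-1/p'(x)})^{p(x)} dx/x ≤ C. Define φ(t) = t^{-1/p'(t)}. Then there is a constant C₁ > 0 depending only on C and p(1) such that for all 0 < x < 1/4 and all y with x/2 ≤ y ≤ 2x (and y ∈ (0,1)), (1/C₁) φ(x) ≤ φ(y) ≤ C₁ φ(x). -/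
/-!
Write `φ(t) = t^{-(1 - 1/p(t))}`. As `p` is nondecreasing and `t ≤ 1`, the function
`t φ(t) = t^{1/p(t)}` is nondecreasing, so `φ(a)/2 ≤ φ(b)` whenever `a ≤ b ≤ 2a`.
In the other direction `φ(b) ≤ a^{-(1 - 1/p(2a))} = D(a) φ(a)` with
`D(a) = a^{1 - 1/p(a)} a^{-(1 - 1/p(2a))}`. By the lower doubling bound, on `(2a, 4a]` the
integrand `(a^{1 - 1/p(a)} φ(x))^{p(x)} / x` is at least `(D(a)/4) / x` as soon as `D(a) ≥ 4`
(raising a number `≥ 1` to the power `p(x) ≥ 1` only increases it), so the integral condition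
gives `D(a) log 2 / 4 ≤ C`.
-/

open MeasureTheory Set Real

/-- `φ(t) = t^{-1/p'(t)}`, where `1/p'(t) = 1 - 1/p(t)`. -/
noncomputable def conjPow (p : ℝ → ℝ) (t : ℝ) : ℝ := t ^ (-(1 - 1 / p t))

lemma one_div_le_one_of_one_le {q : ℝ} (hq : 1 ≤ q) : 1 / q ≤ 1 :=
  (div_le_one (by linarith)).2 hq

lemma setIntegral_Ioc_const_div {a b : ℝ} (ha : 0 < a) (hab : a ≤ b) (c : ℝ) :
    ∫ x in Ioc a b, c / x = c * log (b / a) := by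
  rw [← intervalIntegral.integral_of_le hab]
  simp_rw [div_eq_mul_inv]
  rw [intervalIntegral.integral_const_mul, integral_inv (notMem_uIcc_of_lt ha (ha.trans_le hab)),
    div_eq_mul_inv]

lemma integrableOn_Ioc_const_div {a b : ℝ} (ha : 0 < a) (hab : a ≤ b) (c : ℝ) :
    IntegrableOn (fun x => c / x) (Ioc a b) := by
  simp_rw [div_eq_mul_inv]
  exact ((intervalIntegrable_inv_iff.2
    (Or.inr (notMem_uIcc_of_lt ha (ha.trans_le hab)))).const_mul c).1

section conjPow

variable {p : ℝ → ℝ}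

lemma conjPow_eq_rpow_div {t : ℝ} (ht : 0 < t) : conjPow p t = t ^ (1 / p t) / t := by
  rw [conjPow, show -(1 - 1 / p t) = 1 / p t - 1 by ring, rpow_sub ht, rpow_one]

lemma conjPow_nonneg {t : ℝ} (ht : 0 ≤ t) : 0 ≤ conjPow p t := rpow_nonneg ht _

lemma conjPow_le_inv (hp1 : ∀ x ∈ Ioc (0:ℝ) 1, 1 ≤ p x) {x : ℝ} (hx : x ∈ Ioc 0 1) :
    conjPow p x ≤ x⁻¹ := by
  have hpx : 0 < p x := one_pos.trans_le (hp1 x hx)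
  rw [conjPow_eq_rpow_div hx.1, div_eq_mul_inv]
  exact mul_le_of_le_one_left (inv_nonneg.2 hx.1.le) (rpow_le_one hx.1.le hx.2 (by positivity))

lemma monotoneOn_rpow_one_div (hmono : MonotoneOn p (Ioc 0 1))
    (hp1 : ∀ x ∈ Ioc (0:ℝ) 1, 1 ≤ p x) : MonotoneOn (fun t => t ^ (1 / p t)) (Ioc 0 1) := by
  intro s hs t ht hst
  have hps : 0 < p s := one_pos.trans_le (hp1 s hs)
  calc s ^ (1 / p s) ≤ t ^ (1 / p s) := rpow_le_rpow hs.1.le hst (by positivity)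
    _ ≤ t ^ (1 / p t) := rpow_le_rpow_of_exponent_ge ht.1 ht.2
        (one_div_le_one_div_of_le hps (hmono hs ht hst))

lemma conjPow_div_two_le (hmono : MonotoneOn p (Ioc 0 1)) (hp1 : ∀ x ∈ Ioc (0:ℝ) 1, 1 ≤ p x)
    {a b : ℝ} (ha : 0 < a) (hab : a ≤ b) (hb : b ≤ 2 * a) (hb1 : b ≤ 1) :
    conjPow p a / 2 ≤ conjPow p b := by
  have hb0 : 0 < b := ha.trans_le hab
  rw [conjPow_eq_rpow_div ha, conjPow_eq_rpow_div hb0, div_div]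
  exact div_le_div₀ (by positivity)
    (monotoneOn_rpow_one_div hmono hp1 ⟨ha, hab.trans hb1⟩ ⟨hb0, hb1⟩ hab) hb0 (by linarith)

lemma conjPow_le_rpow (hmono : MonotoneOn p (Ioc 0 1)) (hp1 : ∀ x ∈ Ioc (0:ℝ) 1, 1 ≤ p x)
    {a b : ℝ} (ha : 0 < a) (hab : a ≤ b) (hb : b ≤ 2 * a) (h2a : 2 * a ≤ 1) :
    conjPow p b ≤ a ^ (-(1 - 1 / p (2 * a))) := by
  have hbI : b ∈ Ioc (0:ℝ) 1 := ⟨ha.trans_le hab, hb.trans h2a⟩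
  have hpb : 0 < p b := one_pos.trans_le (hp1 b hbI)
  have hexp : 1 / p (2 * a) ≤ 1 / p b :=
    one_div_le_one_div_of_le hpb (hmono hbI ⟨by linarith, h2a⟩ hb)
  calc conjPow p b ≤ a ^ (-(1 - 1 / p b)) :=
        rpow_le_rpow_of_nonpos ha hab (by linarith [one_div_le_one_of_one_le (hp1 b hbI)])
    _ ≤ a ^ (-(1 - 1 / p (2 * a))) := rpow_le_rpow_of_exponent_ge ha (by linarith) (by linarith)

lemma rpow_le_four_mul_conjPow (hmono : MonotoneOn p (Ioc 0 1))
    (hp1 : ∀ x ∈ Ioc (0:ℝ) 1, 1 ≤ p x) {a x : ℝ} (ha : 0 < a) (hx : x ∈ Ioc (2 * a) (4 * a))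
    (h4a : 4 * a ≤ 1) : a ^ (-(1 - 1 / p (2 * a))) ≤ 4 * conjPow p x := by
  have h2a : 2 * a ∈ Ioc (0:ℝ) 1 := ⟨by linarith, by linarith⟩
  -- `conjPow_div_two_le` for the constant exponent `p (2 * a)`
  have hconst : a ^ (-(1 - 1 / p (2 * a))) / 2 ≤ (2 * a) ^ (-(1 - 1 / p (2 * a))) :=
    conjPow_div_two_le (p := fun _ => p (2 * a)) monotoneOn_const (fun _ _ => hp1 _ h2a)
      ha (by linarith) le_rfl h2a.2
  have hdouble : conjPow p (2 * a) / 2 ≤ conjPow p x :=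
    conjPow_div_two_le hmono hp1 h2a.1 hx.1.le (by linarith [hx.2]) (hx.2.trans h4a)
  rw [conjPow] at hdouble
  linarith

lemma integrableOn_mul_conjPow_rpow_div (hmono : MonotoneOn p (Ioc 0 1))
    (hp1 : ∀ x ∈ Ioc (0:ℝ) 1, 1 ≤ p x) {a c : ℝ} (ha : 0 < a) (hc0 : 0 ≤ c) (hc1 : c ≤ 1) :
    IntegrableOn (fun x => (c * conjPow p x) ^ p x / x) (Ioc a 1) := by
  have hpm : AEMeasurable p (volume.restrict (Ioc a 1)) :=
    aemeasurable_restrict_of_monotoneOn measurableSet_Ioc (hmono.mono (Ioc_subset_Ioc_left ha.le))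
  have hfm : AEMeasurable (fun x => (c * conjPow p x) ^ p x / x) (volume.restrict (Ioc a 1)) := by
    unfold conjPow
    exact (((aemeasurable_id.pow ((hpm.const_div 1).const_sub 1).neg).const_mul c).pow hpm).div
      aemeasurable_id
  refine IntegrableOn.of_bound measure_Ioc_lt_top hfm.aestronglyMeasurable (a⁻¹ ^ p 1 * a⁻¹) ?_
  filter_upwards [ae_restrict_mem measurableSet_Ioc] with x hx
  have hxI : x ∈ Ioc (0:ℝ) 1 := ⟨ha.trans hx.1, hx.2⟩
  have hbase : c * conjPow p x ≤ a⁻¹ :=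
    calc c * conjPow p x ≤ 1 * x⁻¹ :=
          mul_le_mul hc1 (conjPow_le_inv hp1 hxI) (conjPow_nonneg hxI.1.le) zero_le_one
      _ ≤ a⁻¹ := by rw [one_mul]; gcongr; exact hx.1.le
  have hpow : (c * conjPow p x) ^ p x ≤ a⁻¹ ^ p 1 :=
    calc (c * conjPow p x) ^ p x ≤ a⁻¹ ^ p x :=
          rpow_le_rpow (mul_nonneg hc0 (conjPow_nonneg hxI.1.le)) hbase (by linarith [hp1 x hxI])
      _ ≤ a⁻¹ ^ p 1 := rpow_le_rpow_of_exponent_le (one_le_inv₀ ha |>.2 (hx.1.trans_le hx.2).le)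
          (hmono hxI ⟨one_pos, le_rfl⟩ hx.2)
  rw [norm_of_nonneg (div_nonneg (rpow_nonneg (mul_nonneg hc0 (conjPow_nonneg hxI.1.le)) _)
    hxI.1.le), div_eq_mul_inv]
  exact mul_le_mul hpow (by gcongr; exact hx.1.le) (inv_nonneg.2 hxI.1.le) (by positivity)

lemma rpow_mul_rpow_le_of_integral_le (hmono : MonotoneOn p (Ioc 0 1))
    (hp1 : ∀ x ∈ Ioc (0:ℝ) 1, 1 ≤ p x) {C : ℝ}
    (hint : ∀ a ∈ Ioo (0:ℝ) 1,
      ∫ x in Ioc a 1, (a ^ (1 - 1 / p a) * conjPow p x) ^ p x / x ≤ C)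
    {a : ℝ} (ha : 0 < a) (h4a : 4 * a ≤ 1) :
    a ^ (1 - 1 / p a) * a ^ (-(1 - 1 / p (2 * a))) ≤ max 4 (4 * C / log 2) := by
  set c := a ^ (1 - 1 / p a)
  set D := c * a ^ (-(1 - 1 / p (2 * a)))
  rcases le_or_gt D 4 with hD | hD
  · exact le_max_of_le_left hD
  have hc0 : 0 ≤ c := rpow_nonneg ha.le _
  have hc1 : c ≤ 1 := rpow_le_one ha.le (by linarith)
    (by linarith [one_div_le_one_of_one_le (hp1 a ⟨ha, by linarith⟩)])
  set f := fun x => (c * conjPow p x) ^ p x / x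
  have hf : IntegrableOn f (Ioc a 1) := integrableOn_mul_conjPow_rpow_div hmono hp1 ha hc0 hc1
  have hsub : Ioc (2 * a) (4 * a) ⊆ Ioc a 1 := Ioc_subset_Ioc (by linarith) h4a
  have hlower : ∀ x ∈ Ioc (2 * a) (4 * a), D / 4 / x ≤ f x := by
    intro x hx
    have hxI : x ∈ Ioc (0:ℝ) 1 := ⟨by linarith [hx.1], hx.2.trans h4a⟩
    have hbase : D / 4 ≤ c * conjPow p x := by
      have := mul_le_mul_of_nonneg_left (rpow_le_four_mul_conjPow hmono hp1 ha hx h4a) hc0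
      linarith
    have hpow : D / 4 ≤ (c * conjPow p x) ^ p x :=
      calc D / 4 ≤ (D / 4) ^ p x := self_le_rpow_of_one_le (by linarith) (hp1 x hxI)
        _ ≤ (c * conjPow p x) ^ p x := rpow_le_rpow (by linarith) hbase (by linarith [hp1 x hxI])
    exact div_le_div_of_nonneg_right hpow hxI.1.le
  have hlog : 0 < log 2 := log_pos one_lt_two
  have hDC : D / 4 * log 2 ≤ C :=
    calc D / 4 * log 2 = ∫ x in Ioc (2 * a) (4 * a), D / 4 / x := by
          rw [setIntegral_Ioc_const_div (by linarith) (by linarith),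
            show 4 * a / (2 * a) = 2 by field_simp; norm_num]
      _ ≤ ∫ x in Ioc (2 * a) (4 * a), f x :=
          setIntegral_mono_on (integrableOn_Ioc_const_div (by linarith) (by linarith) _)
            (hf.mono_set hsub) measurableSet_Ioc hlower
      _ ≤ ∫ x in Ioc a 1, f x := by
          refine setIntegral_mono_set hf ?_ hsub.eventuallyLE
          filter_upwards [ae_restrict_mem measurableSet_Ioc] with x hx
          exact div_nonneg (rpow_nonneg (mul_nonneg hc0 (conjPow_nonneg (ha.trans hx.1).le)) _)
            (ha.trans hx.1).le
      _ ≤ C := hint a ⟨ha, by linarith⟩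
  exact le_max_of_le_right ((le_div_iff₀ hlog).2 (by linarith))

lemma conjPow_doubling (hmono : MonotoneOn p (Ioc 0 1)) (hp1 : ∀ x ∈ Ioc (0:ℝ) 1, 1 ≤ p x)
    {C : ℝ} (hint : ∀ a ∈ Ioo (0:ℝ) 1,
      ∫ x in Ioc a 1, (a ^ (1 - 1 / p a) * conjPow p x) ^ p x / x ≤ C)
    {a b : ℝ} (ha : 0 < a) (hab : a ≤ b) (hb : b ≤ 2 * a) (h4a : 4 * a ≤ 1) :
    conjPow p a / max 4 (4 * C / log 2) ≤ conjPow p b ∧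
      conjPow p b ≤ max 4 (4 * C / log 2) * conjPow p a := by
  set K := max 4 (4 * C / log 2)
  have hK : 4 ≤ K := le_max_left _ _
  have hφa : 0 ≤ conjPow p a := conjPow_nonneg ha.le
  constructor
  · calc conjPow p a / K ≤ conjPow p a / 2 := div_le_div_of_nonneg_left hφa two_pos (by linarith)
      _ ≤ conjPow p b := conjPow_div_two_le hmono hp1 ha hab hb (by linarith)
  · have hsplit : a ^ (-(1 - 1 / p (2 * a))) =
        a ^ (1 - 1 / p a) * a ^ (-(1 - 1 / p (2 * a))) * conjPow p a := by
      rw [conjPow, mul_right_comm, ← rpow_add ha, add_neg_cancel, rpow_zero, one_mul]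
    calc conjPow p b ≤ a ^ (-(1 - 1 / p (2 * a))) :=
          conjPow_le_rpow hmono hp1 ha hab hb (by linarith)
      _ ≤ K * conjPow p a := by
          rw [hsplit]
          exact mul_le_mul_of_nonneg_right
            (rpow_mul_rpow_le_of_integral_le hmono hp1 hint ha h4a) hφa

end conjPow

lemma div_le_and_le_mul_comm {K u v : ℝ} (hK : 0 < K) :
    (u / K ≤ v ∧ v ≤ K * u) ↔ (v / K ≤ u ∧ u ≤ K * v) := by
  rw [div_le_iff₀ hK, div_le_iff₀ hK]
  constructor <;> rintro ⟨h₁, h₂⟩ <;> constructor <;> linarith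

theorem stmt_1_general (p : ℝ → ℝ) (C : ℝ)
    (hmono : MonotoneOn p (Set.Ioc 0 1))
    (hp1 : ∀ x ∈ Set.Ioc (0:ℝ) 1, 1 ≤ p x)
    (hint : ∀ a ∈ Set.Ioo (0:ℝ) 1,
      ∫ x in Set.Ioc a 1,
        (a ^ (1 - 1 / p a) * x ^ (-(1 - 1 / p x))) ^ p x / x ≤ C) :
    ∃ C₁ > 0, ∀ x ∈ Set.Ioo (0:ℝ) (1/4), ∀ y ∈ Set.Ioo (0:ℝ) 1,
      x / 2 ≤ y → y ≤ 2 * x →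
        x ^ (-(1 - 1 / p x)) / C₁ ≤ y ^ (-(1 - 1 / p y)) ∧
        y ^ (-(1 - 1 / p y)) ≤ C₁ * x ^ (-(1 - 1 / p x)) := by
  refine ⟨max 4 (4 * C / log 2), by positivity, fun x hx y hy hxy hyx => ?_⟩
  show conjPow p x / _ ≤ conjPow p y ∧ conjPow p y ≤ _ * conjPow p x
  rcases le_total x y with h | h
  · exact conjPow_doubling hmono hp1 hint hx.1 h hyx (by linarith [hx.2])
  · exact (div_le_and_le_mul_comm (by positivity)).2
      (conjPow_doubling hmono hp1 hint hy.1 h (by linarith) (by linarith [hx.2]))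

/-- Lemma 3.2: under the modular integral condition the function
`φ(t) = t^{-1/p'(t)}` is doubling near the origin. -/
theorem stmt_1 (p : ℝ → ℝ) (C : ℝ)
    (hmono : MonotoneOn p (Set.Ioc 0 1))
    (hp1 : ∀ x ∈ Set.Ioc (0:ℝ) 1, 1 ≤ p x)
    (hC : 0 < C)
    (hint : ∀ a ∈ Set.Ioo (0:ℝ) 1,
      ∫ x in Set.Ioc a 1,
        (a ^ (1 - 1 / p a) * x ^ (-(1 - 1 / p x))) ^ p x / x ≤ C) :
    ∃ C₁ > 0, ∀ x ∈ Set.Ioo (0:ℝ) (1/4), ∀ y ∈ Set.Ioo (0:ℝ) 1,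
      x / 2 ≤ y → y ≤ 2 * x →
        x ^ (-(1 - 1 / p x)) / C₁ ≤ y ^ (-(1 - 1 / p y)) ∧
        y ^ (-(1 - 1 / p y)) ≤ C₁ * x ^ (-(1 - 1 / p x)) :=
  stmt_1_general p C hmono hp1 hint
end

section
/- Let p : (0,1) → [1,∞) be nondecreasing with p(1) < ∞, and suppose there exists C > 0 such that ∫_a^1 x^{-1/p'(x)} dx/x ≤ C a^{-1/p'(a)} for all a ∈ (0,1). Then there exists C₁ > 0 depending only on C such that (1/p'(2a) - 1/p'(a)) · ln(1/a) ≤ C₁ for all a ∈ (0, 1/2). -/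
open MeasureTheory Set Real

set_option maxHeartbeats 1000000

/-- Lemma 3.3: the Zygmund-type integral condition implies the log-Hölder
type condition on the conjugate exponent. -/
theorem stmt_2 (p : ℝ → ℝ) (C : ℝ)
    (hmono : MonotoneOn p (Set.Ioc 0 1))
    (hp1 : ∀ x ∈ Set.Ioc (0:ℝ) 1, 1 ≤ p x)
    (hC : 0 < C)
    (hint : ∀ a ∈ Set.Ioo (0:ℝ) 1,
      ∫ x in Set.Ioc a 1, x ^ (-(1 - 1 / p x)) / x ≤ C * a ^ (-(1 - 1 / p a))) :
    ∃ C₁ > 0, ∀ a ∈ Set.Ioo (0:ℝ) (1/2),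
      ((1 - 1 / p (2 * a)) - (1 - 1 / p a)) * Real.log (1 / a) ≤ C₁ := by
  have hlog2 : (0:ℝ) < Real.log 2 := Real.log_pos (by norm_num)
  refine ⟨2*C + 2*Real.log 2, by positivity, ?_⟩
  rintro a ⟨ha0, ha2⟩
  have ha1 : a < 1 := by linarith
  have haI : a ∈ Set.Ioc (0:ℝ) 1 := ⟨ha0, ha1.le⟩
  have h2aI : 2*a ∈ Set.Ioc (0:ℝ) 1 := ⟨by linarith, by linarith⟩
  have hpa : 1 ≤ p a := hp1 a haI
  have hp2a : 1 ≤ p (2*a) := hp1 _ h2aI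
  have hpa' : p a ≤ p (2*a) := hmono haI h2aI (by linarith)
  set D : ℝ := (1 - 1 / p (2*a)) - (1 - 1 / p a) with hDdef
  have hD0 : 0 ≤ D := by
    have : 1 / p (2*a) ≤ 1 / p a := one_div_le_one_div_of_le (by linarith) hpa'
    rw [hDdef]; linarith
  have hα2a0 : 0 ≤ 1 - 1/p (2*a) := by
    have : 1/p (2*a) ≤ 1 := by rw [div_le_one (by linarith)]; linarith
    linarith
  have hαa0 : 0 ≤ 1 - 1/p a := by
    have : 1/p a ≤ 1 := by rw [div_le_one (by linarith)]; linarith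
    linarith
  have hα2a1 : 1 - 1/p (2*a) ≤ 1 := by
    have : 0 < 1/p (2*a) := by positivity
    linarith
  have hD1 : D ≤ 1 := by rw [hDdef]; linarith
  have hloga : Real.log (1/a) = -Real.log a := by rw [one_div, Real.log_inv]
  by_cases hcase : (D/2) * Real.log (1/a) < Real.log 2
  · linarith
  push_neg at hcase
  set t : ℝ := a ^ (1 - D/2) with htdef
  have ht0 : 0 < t := Real.rpow_pos_of_pos ha0 _
  have ht1 : t ≤ 1 := Real.rpow_le_one ha0.le ha1.le (by linarith)
  have ht_eq : t = a * a ^ (-(D/2)) := by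
    rw [htdef, show (1 - D/2) = 1 + (-(D/2)) by ring, Real.rpow_add ha0, Real.rpow_one]
  have h2le : (2:ℝ) ≤ a ^ (-(D/2)) := by
    rw [Real.rpow_def_of_pos ha0]
    calc (2:ℝ) = Real.exp (Real.log 2) := (Real.exp_log two_pos).symm
    _ ≤ Real.exp (Real.log a * -(D/2)) := by
        apply Real.exp_le_exp.mpr
        rw [hloga] at hcase; nlinarith
  have h2at : 2*a ≤ t := by
    rw [ht_eq]; nlinarith
  -- integrability of the integrand on Ioc a 1
  have hclampmem : ∀ x : ℝ, max a (min x 1) ∈ Set.Ioc (0:ℝ) 1 :=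
    fun x => ⟨lt_of_lt_of_le ha0 (le_max_left a _), max_le ha1.le (min_le_right x 1)⟩
  have hqmono : Monotone (fun x => p (max a (min x 1))) := fun x y hxy =>
    hmono (hclampmem x) (hclampmem y) (max_le_max le_rfl (min_le_min hxy le_rfl))
  have hqmeas : Measurable (fun x => p (max a (min x 1))) := hqmono.measurable
  have hgmeas : Measurable (fun x : ℝ => x ^ (-(1 - 1 / p (max a (min x 1)))) / x) := by
    apply Measurable.div _ measurable_id
    exact measurable_id.pow ((measurable_const.sub (measurable_const.div hqmeas)).neg)
  have hfint : IntegrableOn (fun x : ℝ => x ^ (-(1 - 1/p x)) / x) (Set.Ioc a 1) := by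
    have hgint : IntegrableOn (fun x : ℝ => x ^ (-(1 - 1 / p (max a (min x 1)))) / x)
        (Set.Ioc a 1) := by
      apply Integrable.mono' (integrable_const (a⁻¹ * a⁻¹)) hgmeas.aestronglyMeasurable
      filter_upwards [ae_restrict_mem measurableSet_Ioc] with x hx
      have hx0 : 0 < x := lt_trans ha0 hx.1
      have hq1 : 1 ≤ p (max a (min x 1)) := hp1 _ (hclampmem x)
      have hq2 : 1/p (max a (min x 1)) ≤ 1 := by
        rw [div_le_one (by linarith)]; linarith
      have hq0 : 0 < 1 / p (max a (min x 1)) := by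
        have : (0:ℝ) < p (max a (min x 1)) := by linarith
        positivity
      have h1 : x ^ (-(1 - 1 / p (max a (min x 1)))) ≤ x ^ (-1 : ℝ) := by
        apply Real.rpow_le_rpow_of_exponent_ge hx0 hx.2
        linarith
      have h2 : x ^ (-1 : ℝ) = x⁻¹ := by
        rw [Real.rpow_neg_one]
      have h3 : x⁻¹ ≤ a⁻¹ := by
        apply inv_anti₀ ha0 hx.1.le
      have hpos : 0 ≤ x ^ (-(1 - 1 / p (max a (min x 1)))) / x := by positivity
      rw [Real.norm_eq_abs, abs_of_nonneg hpos, div_eq_mul_inv]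
      have hb : 0 ≤ x ^ (-(1 - 1 / p (max a (min x 1)))) := Real.rpow_nonneg hx0.le _
      calc x ^ (-(1 - 1 / p (max a (min x 1)))) * x⁻¹ ≤ a⁻¹ * x⁻¹ := by
            apply mul_le_mul_of_nonneg_right _ (inv_nonneg.mpr hx0.le)
            calc x ^ (-(1 - 1 / p (max a (min x 1)))) ≤ x⁻¹ := by rw [← h2]; exact h1
            _ ≤ a⁻¹ := h3
      _ ≤ a⁻¹ * a⁻¹ := by
            apply mul_le_mul_of_nonneg_left _ (inv_nonneg.mpr ha0.le)
            exact le_trans (inv_anti₀ ha0 hx.1.le) le_rfl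
    apply hgint.congr_fun _ measurableSet_Ioc
    intro x hx
    simp only [min_eq_left hx.2, max_eq_right hx.1.le]
  have hsub : Set.Ioc (2*a) t ⊆ Set.Ioc a 1 :=
    fun x hx => ⟨lt_of_le_of_lt (by linarith) hx.1, hx.2.trans ht1⟩
  have hstep1 : ∫ x in Set.Ioc (2*a) t, x ^ (-(1 - 1/p x))/x
      ≤ ∫ x in Set.Ioc a 1, x ^ (-(1 - 1/p x))/x := by
    apply setIntegral_mono_set hfint ?_ (HasSubset.Subset.eventuallyLE hsub)
    filter_upwards [ae_restrict_mem measurableSet_Ioc] with x hx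
    have hx0 : 0 < x := lt_trans ha0 hx.1
    positivity
  have hint2 : IntegrableOn (fun x : ℝ => t ^ (-(1 - 1/p (2*a))) * x⁻¹)
      (Set.Ioc (2*a) t) := by
    apply IntegrableOn.mono_set _ Set.Ioc_subset_Icc_self
    apply ContinuousOn.integrableOn_Icc
    apply continuousOn_const.mul
    apply ContinuousOn.inv₀ continuousOn_id
    intro x hx
    have : 0 < x := lt_of_lt_of_le (by linarith) hx.1
    exact ne_of_gt this
  have hstep2 : ∫ x in Set.Ioc (2*a) t, t ^ (-(1 - 1/p (2*a))) * x⁻¹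
      ≤ ∫ x in Set.Ioc (2*a) t, x ^ (-(1 - 1/p x))/x := by
    apply setIntegral_mono_on hint2 (hfint.mono_set hsub) measurableSet_Ioc
    intro x hx
    have hx0 : 0 < x := lt_trans (by linarith) hx.1
    have hx1 : x ≤ 1 := hx.2.trans ht1
    have hpx : p (2*a) ≤ p x := hmono h2aI ⟨hx0, hx1⟩ hx.1.le
    have h1 : x ^ (-(1 - 1/p (2*a))) ≤ x ^ (-(1 - 1/p x)) := by
      apply Real.rpow_le_rpow_of_exponent_ge hx0 hx1
      have : 1/p x ≤ 1/p (2*a) := one_div_le_one_div_of_le (by linarith) hpx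
      linarith
    have h2 : t ^ (-(1 - 1/p (2*a))) ≤ x ^ (-(1 - 1/p (2*a))) :=
      Real.rpow_le_rpow_of_nonpos hx0 hx.2 (by linarith)
    rw [div_eq_mul_inv]
    exact mul_le_mul_of_nonneg_right (h2.trans h1) (inv_nonneg.mpr hx0.le)
  have hcomp : ∫ x in Set.Ioc (2*a) t, t ^ (-(1 - 1/p (2*a))) * x⁻¹
      = t ^ (-(1 - 1/p (2*a))) * (Real.log t - Real.log (2*a)) := by
    rw [MeasureTheory.integral_const_mul]
    congr 1
    rw [← intervalIntegral.integral_of_le h2at, integral_inv_of_pos (by linarith) ht0,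
      Real.log_div (ne_of_gt ht0) (by positivity)]
  have hchain : t ^ (-(1 - 1/p (2*a))) * (Real.log t - Real.log (2*a))
      ≤ C * a ^ (-(1 - 1/p a)) := by
    rw [← hcomp]
    exact le_trans (hstep2.trans hstep1) (hint a ⟨ha0, ha1⟩)
  have hlogt : Real.log t = (1 - D/2) * Real.log a := Real.log_rpow ha0 _
  have hlog2a : Real.log (2*a) = Real.log 2 + Real.log a :=
    Real.log_mul two_ne_zero (ne_of_gt ha0)
  have hdiff : Real.log t - Real.log (2*a) = (D/2) * Real.log (1/a) - Real.log 2 := by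
    rw [hlogt, hlog2a, hloga]; ring
  have hdiff0 : 0 ≤ Real.log t - Real.log (2*a) := by rw [hdiff]; linarith
  have hexp : t ^ (-(1 - 1/p (2*a))) = a ^ ((1 - D/2) * (-(1 - 1/p (2*a)))) := by
    rw [htdef, ← Real.rpow_mul ha0.le]
  have hkey2 : a ^ (-(1 - 1/p a) + -(D/2)) ≤ t ^ (-(1 - 1/p (2*a))) := by
    rw [hexp]
    apply Real.rpow_le_rpow_of_exponent_ge ha0 ha1.le
    rw [hDdef]
    nlinarith [mul_nonneg hD0 (sub_nonneg.mpr hα2a1)]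
  have h5 : a ^ (-(1 - 1/p a)) * (a ^ (-(D/2)) * (Real.log t - Real.log (2*a)))
      ≤ a ^ (-(1 - 1/p a)) * C := by
    calc a ^ (-(1 - 1/p a)) * (a ^ (-(D/2)) * (Real.log t - Real.log (2*a)))
        = a ^ (-(1 - 1/p a) + -(D/2)) * (Real.log t - Real.log (2*a)) := by
          rw [Real.rpow_add ha0]; ring
    _ ≤ t ^ (-(1 - 1/p (2*a))) * (Real.log t - Real.log (2*a)) :=
          mul_le_mul_of_nonneg_right hkey2 hdiff0
    _ ≤ C * a ^ (-(1 - 1/p a)) := hchain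
    _ = a ^ (-(1 - 1/p a)) * C := mul_comm _ _
  have h6 : a ^ (-(D/2)) * (Real.log t - Real.log (2*a)) ≤ C :=
    le_of_mul_le_mul_left h5 (Real.rpow_pos_of_pos ha0 _)
  have h7 : Real.log t - Real.log (2*a) ≤ C := by
    nlinarith [mul_le_mul_of_nonneg_right h2le hdiff0]
  rw [hdiff] at h7
  linarith
end

section
/- Let p : (0,1) → [1,∞) be nondecreasing with p(1) < ∞, satisfying ∫_a^1 x^{-1/p'(x)} dx/x ≤ C a^{-1/p'(a)} for all a ∈ (0,1). Let φ(t) = t^{-1/p'(t)}. Then there exists C₁ > 0 such that for all 0 < x < 1/4 and x/2 < y < 2x (with y ∈ (0,1)), (1/C₁) φ(x) ≤ φ(y) ≤ C₁ φ(x). -/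
open MeasureTheory Set Real

/-!
Write `α = 1 - 1/p`, a nondecreasing exponent with values in `[0, 1]`, so that `φ t = t ^ (-α t)`.
For `s ≤ t ≤ 2 s`, monotonicity of `α` alone gives `φ s ≤ 2 φ t`. The same estimate shows that
`φ u ≥ φ t / 2` on `(t, 2t]`, hence `∫_t^{2t} φ(u) du/u ≥ (log 2 / 2) φ t`; since this integral is
part of the one controlled by the hypothesis at `s`, it follows that `φ t ≤ (2C / log 2) φ s`.
-/

theorem rpow_neg_le_two_mul_rpow_neg {s t σ τ : ℝ} (hs : 0 < s) (hst : s ≤ t) (ht : t ≤ 1)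
    (hts : t ≤ 2 * s) (hστ : σ ≤ τ) (hτ₀ : 0 ≤ τ) (hτ₁ : τ ≤ 1) :
    s ^ (-σ) ≤ 2 * t ^ (-τ) := by
  have ht₀ : 0 < t := hs.trans_le hst
  calc s ^ (-σ) ≤ s ^ (-τ) := rpow_le_rpow_of_exponent_ge hs (hst.trans ht) (neg_le_neg hστ)
    _ ≤ (t / 2) ^ (-τ) := rpow_le_rpow_of_nonpos (by positivity) (by linarith) (by linarith)
    _ = 2 ^ τ * t ^ (-τ) := by
      rw [div_rpow (by linarith) zero_le_two, rpow_neg zero_le_two, div_inv_eq_mul, mul_comm]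
    _ ≤ 2 * t ^ (-τ) := by
      gcongr
      simpa only [rpow_one] using rpow_le_rpow_of_exponent_le one_le_two hτ₁

theorem integrableOn_rpow_neg_div_self {α : ℝ → ℝ} (hα : MonotoneOn α (Ioc 0 1))
    (hα₁ : ∀ t ∈ Ioc (0 : ℝ) 1, α t ≤ 1) {a : ℝ} (ha : 0 < a) :
    IntegrableOn (fun t => t ^ (-α t) / t) (Ioc a 1) := by
  have hsub : Ioc a 1 ⊆ Ioc 0 1 := Ioc_subset_Ioc_left ha.le
  have hmeas : AEMeasurable α (volume.restrict (Ioc a 1)) :=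
    aemeasurable_restrict_of_monotoneOn measurableSet_Ioc (hα.mono hsub)
  refine ⟨((aemeasurable_id.pow hmeas.neg).div aemeasurable_id).aestronglyMeasurable,
    HasFiniteIntegral.restrict_of_bounded (C := a⁻¹ * a⁻¹) measure_Ioc_lt_top ?_⟩
  refine (ae_restrict_iff' measurableSet_Ioc).mpr (ae_of_all _ fun t ht => ?_)
  have ht₀ : 0 < t := ha.trans ht.1
  have hinv : t⁻¹ ≤ a⁻¹ := inv_anti₀ ha ht.1.le
  have hpow : t ^ (-α t) ≤ t⁻¹ := by
    simpa only [rpow_neg_one] using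
      rpow_le_rpow_of_exponent_ge ht₀ ht.2 (neg_le_neg (hα₁ t (hsub ht)))
  rw [norm_of_nonneg (by positivity), div_eq_mul_inv]
  gcongr
  exact hpow.trans hinv

theorem log_two_div_two_mul_rpow_neg_le_setIntegral {α : ℝ → ℝ} (hα : MonotoneOn α (Ioc 0 1))
    (hα₀ : ∀ t ∈ Ioc (0 : ℝ) 1, 0 ≤ α t) (hα₁ : ∀ t ∈ Ioc (0 : ℝ) 1, α t ≤ 1) {t : ℝ}
    (ht : 0 < t) (h2t : 2 * t ≤ 1) :
    log 2 / 2 * t ^ (-α t) ≤ ∫ u in Ioc t (2 * t), u ^ (-α u) / u := by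
  have htI : t ∈ Ioc (0 : ℝ) 1 := ⟨ht, by linarith⟩
  have hlower : ∀ u ∈ Ioc t (2 * t), t ^ (-α t) / 2 * u⁻¹ ≤ u ^ (-α u) / u := by
    intro u hu
    have huI : u ∈ Ioc (0 : ℝ) 1 := ⟨ht.trans hu.1, hu.2.trans h2t⟩
    have hu₀ := huI.1
    have := rpow_neg_le_two_mul_rpow_neg ht hu.1.le huI.2 hu.2 (hα htI huI hu.1.le)
      (hα₀ u huI) (hα₁ u huI)
    rw [div_eq_mul_inv (u ^ _)]
    gcongr
    linarith
  have hinv : IntegrableOn (fun u : ℝ => t ^ (-α t) / 2 * u⁻¹) (Ioc t (2 * t)) :=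
    (continuousOn_const.mul (continuousOn_inv₀.mono fun u hu => (ht.trans_le hu.1).ne')
      |>.integrableOn_compact isCompact_Icc).mono_set Ioc_subset_Icc_self
  calc log 2 / 2 * t ^ (-α t) = ∫ u in Ioc t (2 * t), t ^ (-α t) / 2 * u⁻¹ := by
        rw [integral_const_mul, ← intervalIntegral.integral_of_le (by linarith),
          integral_inv_of_pos ht (by linarith), mul_div_cancel_right₀ _ ht.ne']
        ring
    _ ≤ ∫ u in Ioc t (2 * t), u ^ (-α u) / u :=
      setIntegral_mono_on hinv
        ((integrableOn_rpow_neg_div_self hα hα₁ ht).mono_set (Ioc_subset_Ioc_right h2t))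
        measurableSet_Ioc hlower

theorem rpow_neg_le_of_setIntegral_le {α : ℝ → ℝ} (hα : MonotoneOn α (Ioc 0 1))
    (hα₀ : ∀ t ∈ Ioc (0 : ℝ) 1, 0 ≤ α t) (hα₁ : ∀ t ∈ Ioc (0 : ℝ) 1, α t ≤ 1) {C s t : ℝ}
    (hs : 0 < s) (hst : s ≤ t) (h2t : 2 * t ≤ 1)
    (hint : ∫ u in Ioc s 1, u ^ (-α u) / u ≤ C * s ^ (-α s)) :
    t ^ (-α t) ≤ 2 * C / log 2 * s ^ (-α s) := by
  have hnonneg : ∀ u ∈ Ioc s 1, 0 ≤ u ^ (-α u) / u := fun u hu => by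
    have hu₀ : 0 < u := hs.trans hu.1
    positivity
  have key : log 2 / 2 * t ^ (-α t) ≤ C * s ^ (-α s) :=
    calc log 2 / 2 * t ^ (-α t) ≤ ∫ u in Ioc t (2 * t), u ^ (-α u) / u :=
          log_two_div_two_mul_rpow_neg_le_setIntegral hα hα₀ hα₁ (hs.trans_le hst) h2t
      _ ≤ ∫ u in Ioc s 1, u ^ (-α u) / u :=
          setIntegral_mono_set (integrableOn_rpow_neg_div_self hα hα₁ hs)
            ((ae_restrict_iff' measurableSet_Ioc).mpr (ae_of_all _ hnonneg))
            (Ioc_subset_Ioc hst h2t).eventuallyLE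
      _ ≤ C * s ^ (-α s) := hint
  have hlog : 0 < log 2 := log_pos one_lt_two
  rw [div_mul_eq_mul_div, le_div_iff₀ hlog]
  linarith

theorem rpow_neg_comparable_of_setIntegral_le {α : ℝ → ℝ} (hα : MonotoneOn α (Ioc 0 1))
    (hα₀ : ∀ t ∈ Ioc (0 : ℝ) 1, 0 ≤ α t) (hα₁ : ∀ t ∈ Ioc (0 : ℝ) 1, α t ≤ 1) {C : ℝ}
    (hint : ∀ a ∈ Ioo (0 : ℝ) 1, ∫ u in Ioc a 1, u ^ (-α u) / u ≤ C * a ^ (-α a))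
    {s t : ℝ} (hs : 0 < s) (hst : s ≤ t) (hts : t ≤ 2 * s) (h2t : 2 * t ≤ 1) :
    s ^ (-α s) ≤ max 2 (2 * C / log 2) * t ^ (-α t) ∧
      t ^ (-α t) ≤ max 2 (2 * C / log 2) * s ^ (-α s) := by
  have hsI : s ∈ Ioc (0 : ℝ) 1 := ⟨hs, by linarith⟩
  have htI : t ∈ Ioc (0 : ℝ) 1 := ⟨hs.trans_le hst, by linarith⟩
  have hs_le := rpow_neg_le_two_mul_rpow_neg hs hst htI.2 hts (hα hsI htI hst) (hα₀ t htI)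
    (hα₁ t htI)
  have ht_le := rpow_neg_le_of_setIntegral_le hα hα₀ hα₁ hs hst h2t (hint s ⟨hs, by linarith⟩)
  have hφs : 0 ≤ s ^ (-α s) := rpow_nonneg hs.le _
  have hφt : 0 ≤ t ^ (-α t) := rpow_nonneg htI.1.le _
  exact ⟨hs_le.trans (by gcongr; exact le_max_left _ _),
    ht_le.trans (by gcongr; exact le_max_right _ _)⟩

theorem one_sub_inv_mem_Icc {p : ℝ} (hp : 1 ≤ p) : 1 - 1 / p ∈ Icc (0 : ℝ) 1 :=
  ⟨sub_nonneg.2 (div_le_one_of_le₀ hp (by linarith)),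
    sub_le_self _ (one_div_nonneg.2 (by linarith))⟩

theorem MonotoneOn.one_sub_inv {p : ℝ → ℝ} {S : Set ℝ} (hmono : MonotoneOn p S)
    (hpos : ∀ x ∈ S, 0 < p x) : MonotoneOn (fun x => 1 - 1 / p x) S := fun a ha b hb hab => by
  have := hpos a ha
  have := hmono ha hb hab
  simp only
  gcongr

theorem stmt_3_general (p : ℝ → ℝ) (C : ℝ)
    (hmono : MonotoneOn p (Set.Ioc 0 1))
    (hp1 : ∀ x ∈ Set.Ioc (0:ℝ) 1, 1 ≤ p x)
    (hint : ∀ a ∈ Set.Ioo (0:ℝ) 1,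
      ∫ x in Set.Ioc a 1, x ^ (-(1 - 1 / p x)) / x ≤ C * a ^ (-(1 - 1 / p a))) :
    ∃ C₁ > 0, ∀ x ∈ Set.Ioo (0:ℝ) (1/4), ∀ y ∈ Set.Ioo (0:ℝ) 1,
      x / 2 < y → y < 2 * x →
        x ^ (-(1 - 1 / p x)) / C₁ ≤ y ^ (-(1 - 1 / p y)) ∧
        y ^ (-(1 - 1 / p y)) ≤ C₁ * x ^ (-(1 - 1 / p x)) := by
  have hα := hmono.one_sub_inv fun x hx => one_pos.trans_le (hp1 x hx)
  have hα₀ x hx := (one_sub_inv_mem_Icc (hp1 x hx)).1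
  have hα₁ x hx := (one_sub_inv_mem_Icc (hp1 x hx)).2
  have hK : (0 : ℝ) < max 2 (2 * C / log 2) := zero_lt_two.trans_le (le_max_left _ _)
  refine ⟨_, hK, fun x hx y hy hxy hyx => ?_⟩
  have hcomp : x ^ (-(1 - 1 / p x)) ≤ max 2 (2 * C / log 2) * y ^ (-(1 - 1 / p y)) ∧
      y ^ (-(1 - 1 / p y)) ≤ max 2 (2 * C / log 2) * x ^ (-(1 - 1 / p x)) := by
    rcases le_total x y with h | h
    · exact rpow_neg_comparable_of_setIntegral_le hα hα₀ hα₁ hint hx.1 h hyx.le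
        (by linarith [hx.2])
    · exact (rpow_neg_comparable_of_setIntegral_le hα hα₀ hα₁ hint hy.1 h (by linarith)
        (by linarith [hx.2])).symm
  exact ⟨(div_le_iff₀' hK).2 hcomp.1, hcomp.2⟩

/-- Lemma 3.4: under the Zygmund-type integral condition the function
`φ(t) = t^{-1/p'(t)}` is doubling near the origin. -/
theorem stmt_3 (p : ℝ → ℝ) (C : ℝ)
    (hmono : MonotoneOn p (Set.Ioc 0 1))
    (hp1 : ∀ x ∈ Set.Ioc (0:ℝ) 1, 1 ≤ p x)
    (hC : 0 < C)
    (hint : ∀ a ∈ Set.Ioo (0:ℝ) 1,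
      ∫ x in Set.Ioc a 1, x ^ (-(1 - 1 / p x)) / x ≤ C * a ^ (-(1 - 1 / p a))) :
    ∃ C₁ > 0, ∀ x ∈ Set.Ioo (0:ℝ) (1/4), ∀ y ∈ Set.Ioo (0:ℝ) 1,
      x / 2 < y → y < 2 * x →
        x ^ (-(1 - 1 / p x)) / C₁ ≤ y ^ (-(1 - 1 / p y)) ∧
        y ^ (-(1 - 1 / p y)) ≤ C₁ * x ^ (-(1 - 1 / p x)) :=
  stmt_3_general p C hmono hp1 hint
end

section
/- Let φ : (0,1) → (0,∞) be measurable, g(x) = ∫_x^1 φ(t) dt/t finite for x ∈ (0,1), C ≥ 1 with g(x) ≤ C φ(x) for all x ∈ (0,1). Then g(t₂) t₂^{1/C} ≤ g(t₁) t₁^{1/C} for all 0 < t₁ ≤ t₂ < 1; that is, x^{1/C} g(x) is nonincreasing on (0,1). -/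
/-!
On `[t₁, t₂] ⊂ (0, 1)` the function `g` is an indefinite integral, hence absolutely continuous
with `g' = -φ(x)/x` almost everywhere. So `F(x) = x^{1/C} g(x)` is absolutely continuous with
`F' = x^{1/C - 1} (g/C - φ) ≤ 0` almost everywhere, and the fundamental theorem of calculus for
absolutely continuous functions gives `F(t₂) ≤ F(t₁)`.
-/

open MeasureTheory Set Real

theorem AbsolutelyContinuousOnInterval.le_of_ae_deriv_nonpos {F : ℝ → ℝ} {a b : ℝ} (hab : a ≤ b)
    (hF : AbsolutelyContinuousOnInterval F a b) (hF' : ∀ᵐ x, x ∈ Ioo a b → deriv F x ≤ 0) :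
    F b ≤ F a := by
  have hneg : 0 ≤ᵐ[volume.restrict (Icc a b)] fun x ↦ -deriv F x := by
    rw [Filter.EventuallyLE, ← ae_restrict_congr_set Ioo_ae_eq_Icc,
      ae_restrict_iff' measurableSet_Ioo]
    filter_upwards [hF'] with x hx hxab using neg_nonneg.mpr (hx hxab)
  have := intervalIntegral.integral_nonneg_of_ae_restrict hab hneg
  rw [intervalIntegral.integral_neg, hF.integral_deriv_eq_sub] at this
  linarith

theorem mul_rpow_le_mul_rpow_of_eq_add_integral {ψ g : ℝ → ℝ} {a b r : ℝ} (ha : 0 < a)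
    (hab : a ≤ b) (hψ : IntervalIntegrable ψ volume a b)
    (hg : ∀ x ∈ Icc a b, g x = g b + ∫ t in x..b, ψ t)
    (hbound : ∀ᵐ x, x ∈ Ioo a b → r * g x ≤ x * ψ x) :
    g b * b ^ r ≤ g a * a ^ r := by
  set G : ℝ → ℝ := fun x ↦ g b - ∫ t in b..x, ψ t
  have hgG : ∀ x ∈ Icc a b, g x = G x := fun x hx ↦ by
    rw [hg x hx, intervalIntegral.integral_symm, ← sub_eq_add_neg]
  have hG : AbsolutelyContinuousOnInterval G a b :=
    contDiffOn_const.absolutelyContinuousOnInterval.sub <|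
      hψ.absolutelyContinuousOnInterval_intervalIntegral (by simp [hab])
  have hpow : AbsolutelyContinuousOnInterval (fun x ↦ x ^ r) a b := by
    refine ContDiffOn.absolutelyContinuousOnInterval fun x hx ↦ ?_
    rw [uIcc_of_le hab] at hx
    exact (contDiffAt_rpow_const_of_ne (ha.trans_le hx.1).ne').contDiffWithinAt
  have key := (hpow.mul hG).le_of_ae_deriv_nonpos hab ?_
  · simpa [hgG a (left_mem_Icc.2 hab), hgG b (right_mem_Icc.2 hab), mul_comm] using key
  filter_upwards [hbound, hψ.ae_hasDerivAt_integral] with x hx hψx hxab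
  have hx0 : 0 < x := ha.trans hxab.1
  have hxI : x ∈ uIcc a b := by rw [uIcc_of_le hab]; exact Ioo_subset_Icc_self hxab
  have hderiv : HasDerivAt ((fun x ↦ x ^ r) * G)
      (r * x ^ (r - 1) * G x + x ^ r * -ψ x) x :=
    (hasDerivAt_rpow_const (Or.inl hx0.ne')).mul
      ((hψx hxI b (by simp [hab])).const_sub (g b))
  rw [hderiv.deriv, ← hgG x (Ioo_subset_Icc_self hxab), rpow_sub_one hx0.ne']
  have hrg := hx hxab
  have hpos : 0 < x ^ r / x := by positivity
  calc r * (x ^ r / x) * g x + x ^ r * -ψ x = x ^ r / x * (r * g x - x * ψ x) := by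
        field_simp; ring
    _ ≤ 0 := mul_nonpos_of_nonneg_of_nonpos hpos.le (by linarith)

theorem stmt_6_general (φ g : ℝ → ℝ) (C : ℝ)
    (hintegr : ∀ x ∈ Set.Ioo (0:ℝ) 1,
      MeasureTheory.IntegrableOn (fun t => φ t / t) (Set.Ioc x 1))
    (hgdef : ∀ x ∈ Set.Ioo (0:ℝ) 1, g x = ∫ t in Set.Ioc x 1, φ t / t)
    (hC : 1 ≤ C)
    (hg : ∀ x ∈ Set.Ioo (0:ℝ) 1, g x ≤ C * φ x) :
    ∀ t₁ t₂ : ℝ, 0 < t₁ → t₁ ≤ t₂ → t₂ < 1 →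
      g t₂ * t₂ ^ (1 / C) ≤ g t₁ * t₁ ^ (1 / C) := by
  intro t₁ t₂ ht₁ h12 ht₂
  have hsub : Icc t₁ t₂ ⊆ Ioo 0 1 := Icc_subset_Ioo ht₁ ht₂
  have hint : ∀ x ∈ Icc t₁ t₂, IntervalIntegrable (fun t ↦ φ t / t) volume x 1 := fun x hx ↦
    (intervalIntegrable_iff_integrableOn_Ioc_of_le (hsub hx).2.le).2 (hintegr x (hsub hx))
  refine mul_rpow_le_mul_rpow_of_eq_add_integral ht₁ h12
    ((hint t₁ ⟨le_rfl, h12⟩).mono_set (uIcc_subset_uIcc left_mem_uIcc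
      (Icc_subset_uIcc ⟨h12, ht₂.le⟩))) (fun x hx ↦ ?_) (ae_of_all _ fun x hx ↦ ?_)
  · have ht₂I : t₂ ∈ Icc t₁ t₂ := ⟨h12, le_rfl⟩
    rw [hgdef x (hsub hx), hgdef t₂ (hsub ht₂I), ← intervalIntegral.integral_of_le (hsub hx).2.le,
      ← intervalIntegral.integral_of_le ht₂.le,
      ← intervalIntegral.integral_add_adjacent_intervals _ (hint t₂ ht₂I), add_comm]
    exact (hint x hx).mono_set (uIcc_subset_uIcc left_mem_uIcc (Icc_subset_uIcc ⟨hx.2, ht₂.le⟩))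
  · have hx0 : 0 < x := ht₁.trans hx.1
    rw [mul_div_cancel₀ _ hx0.ne', one_div, inv_mul_le_iff₀ (by linarith)]
    exact hg x (hsub (Ioo_subset_Icc_self hx))

/-- If `g(x) = ∫_x^1 φ(t) dt/t` satisfies `g ≤ C φ`, then `x^{1/C} g(x)` is
nonincreasing on `(0,1)`. -/
theorem stmt_6 (φ g : ℝ → ℝ) (C : ℝ)
    (hφmeas : Measurable φ)
    (hφpos : ∀ x ∈ Set.Ioo (0:ℝ) 1, 0 < φ x)
    (hintegr : ∀ x ∈ Set.Ioo (0:ℝ) 1,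
      MeasureTheory.IntegrableOn (fun t => φ t / t) (Set.Ioc x 1))
    (hgdef : ∀ x ∈ Set.Ioo (0:ℝ) 1, g x = ∫ t in Set.Ioc x 1, φ t / t)
    (hC : 1 ≤ C)
    (hg : ∀ x ∈ Set.Ioo (0:ℝ) 1, g x ≤ C * φ x) :
    ∀ t₁ t₂ : ℝ, 0 < t₁ → t₁ ≤ t₂ → t₂ < 1 →
      g t₂ * t₂ ^ (1 / C) ≤ g t₁ * t₁ ^ (1 / C) :=
  stmt_6_general φ g C hintegr hgdef hC hg
end

section
/- Let p : (0,1) → [1,∞) be nondecreasing with p(1) < ∞ and assume the condition ∫_a^1 (a^{1/p'(a)} x^{-1/p'(x)})^{p(x)} dx/x ≤ C for all a ∈ (0,1). Then the function φ(x) = x^{-1/p'(x)} is almost decreasing: there exists C' > 0 such that φ(t₂) ≤ C' φ(t₁) whenever 0 < t₁ ≤ t₂ < 1. -/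
open MeasureTheory Set Real

/-- Lemma 3.7: under the modular integral condition, `φ(x) = x^{-1/p'(x)}`
is almost decreasing on `(0,1)`. -/
theorem stmt_8 (p : ℝ → ℝ) (C : ℝ)
    (hmono : MonotoneOn p (Set.Ioc 0 1))
    (hp1 : ∀ x ∈ Set.Ioc (0:ℝ) 1, 1 ≤ p x)
    (hC : 0 < C)
    (hint : ∀ a ∈ Set.Ioo (0:ℝ) 1,
      ∫ x in Set.Ioc a 1,
        (a ^ (1 - 1 / p a) * x ^ (-(1 - 1 / p x))) ^ p x / x ≤ C) :
    ∃ C' > 0, ∀ t₁ t₂ : ℝ, 0 < t₁ → t₁ ≤ t₂ → t₂ < 1 →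
      t₂ ^ (-(1 - 1 / p t₂)) ≤ C' * t₁ ^ (-(1 - 1 / p t₁)) := by
  have hlog2 : (0:ℝ) < Real.log 2 := Real.log_pos (by norm_num)
  refine ⟨max 4 (2 * C / Real.log 2), lt_of_lt_of_le (by norm_num) (le_max_left _ _), ?_⟩
  intro t₁ t₂ ht₁ h12 ht₂1
  have ht₂ : 0 < t₂ := lt_of_lt_of_le ht₁ h12
  have ht₁1 : t₁ < 1 := lt_of_le_of_lt h12 ht₂1
  have ht₁m : t₁ ∈ Set.Ioc (0:ℝ) 1 := ⟨ht₁, ht₁1.le⟩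
  have ht₂m : t₂ ∈ Set.Ioc (0:ℝ) 1 := ⟨ht₂, ht₂1.le⟩
  have hαb : ∀ x ∈ Set.Ioc (0:ℝ) 1, 0 ≤ 1 - 1 / p x ∧ 1 - 1 / p x ≤ 1 := by
    intro x hx
    have h1 := hp1 x hx
    have hpx : 0 < p x := lt_of_lt_of_le one_pos h1
    have h2 : 1 / p x ≤ 1 := by rw [div_le_one hpx]; exact h1
    have h3 : 0 ≤ 1 / p x := by positivity
    exact ⟨by linarith, by linarith⟩
  have hα₁0 : 0 ≤ 1 - 1 / p t₁ := (hαb t₁ ht₁m).1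
  have hα₂0 : 0 ≤ 1 - 1 / p t₂ := (hαb t₂ ht₂m).1
  have hα₂1 : 1 - 1 / p t₂ ≤ 1 := (hαb t₂ ht₂m).2
  set K : ℝ := t₁ ^ (1 - 1 / p t₁) * t₂ ^ (-(1 - 1 / p t₂)) with hKdef
  -- reduce the goal to `K ≤ C'`
  have hred : K ≤ max 4 (2 * C / Real.log 2) →
      t₂ ^ (-(1 - 1 / p t₂)) ≤ max 4 (2 * C / Real.log 2) * t₁ ^ (-(1 - 1 / p t₁)) := by
    intro hK
    have h1 : t₂ ^ (-(1 - 1 / p t₂)) = K * t₁ ^ (-(1 - 1 / p t₁)) := by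
      rw [hKdef, mul_right_comm, ← Real.rpow_add ht₁, add_neg_cancel, Real.rpow_zero, one_mul]
    rw [h1]
    exact mul_le_mul_of_nonneg_right hK (Real.rpow_nonneg ht₁.le _)
  apply hred
  have ht₁α1 : t₁ ^ (1 - 1 / p t₁) ≤ 1 := Real.rpow_le_one ht₁.le ht₁1.le hα₁0
  rcases le_or_gt (1/2 : ℝ) t₂ with hhalf | hhalf
  · -- easy case : t₂ ≥ 1/2, so K ≤ 2
    have h2 : t₂ ^ (-(1 - 1 / p t₂)) ≤ 2 := by
      have h3 : t₂ ^ (-(1 - 1 / p t₂)) ≤ t₂ ^ (-1 : ℝ) :=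
        Real.rpow_le_rpow_of_exponent_ge ht₂ ht₂1.le (by linarith)
      rw [Real.rpow_neg_one] at h3
      have h4 : t₂⁻¹ ≤ 2 := by
        rw [inv_le_comm₀ ht₂ (by norm_num)]
        linarith
      linarith
    have : K ≤ 2 := by
      calc K ≤ 1 * 2 := mul_le_mul ht₁α1 h2 (Real.rpow_nonneg ht₂.le _) one_pos.le
      _ = 2 := one_mul 2
    exact le_trans this (le_trans (by norm_num) (le_max_left _ _))
  · rcases le_or_gt K 4 with h4 | h4
    · exact le_trans h4 (le_max_left _ _)
    -- main case : t₂ < 1/2 and K > 4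
    have h2t₂1 : 2 * t₂ < 1 := by linarith
    set f : ℝ → ℝ := fun x => (t₁ ^ (1 - 1 / p t₁) * x ^ (-(1 - 1 / p x))) ^ p x / x with hf
    have hCint : ∫ x in Set.Ioc t₁ 1, f x ≤ C := hint t₁ ⟨ht₁, ht₁1⟩
    -- measurability of f on Ioc t₁ 1
    have hsub : Set.Ioc t₁ 1 ⊆ Set.Ioc (0:ℝ) 1 := Set.Ioc_subset_Ioc ht₁.le le_rfl
    have hpm : AEMeasurable p (volume.restrict (Set.Ioc t₁ 1)) :=
      aemeasurable_restrict_of_monotoneOn measurableSet_Ioc (hmono.mono hsub)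
    have hfm : AEMeasurable f (volume.restrict (Set.Ioc t₁ 1)) := by
      set g : ℝ → ℝ := fun x =>
        Real.exp (Real.log (t₁ ^ (1 - 1 / p t₁) *
          Real.exp (Real.log x * (-(1 - 1 / p x)))) * p x) / x with hg
      have hgm : AEMeasurable g (volume.restrict (Set.Ioc t₁ 1)) := by
        apply AEMeasurable.div _ aemeasurable_id'
        apply Real.measurable_exp.comp_aemeasurable
        apply AEMeasurable.mul _ hpm
        apply Real.measurable_log.comp_aemeasurable
        apply AEMeasurable.const_mul
        apply Real.measurable_exp.comp_aemeasurable
        apply AEMeasurable.mul (Real.measurable_log.comp_aemeasurable aemeasurable_id')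
        exact (aemeasurable_const.sub (aemeasurable_const.div hpm)).neg
      refine hgm.congr ?_
      rw [Filter.EventuallyEq, ae_restrict_iff' measurableSet_Ioc]
      refine Filter.Eventually.of_forall (fun x hx => ?_)
      have hx0 : 0 < x := lt_trans ht₁ hx.1
      have hb0 : 0 < t₁ ^ (1 - 1 / p t₁) * x ^ (-(1 - 1 / p x)) :=
        mul_pos (Real.rpow_pos_of_pos ht₁ _) (Real.rpow_pos_of_pos hx0 _)
      rw [hg, hf]
      simp only
      rw [Real.rpow_def_of_pos hb0, Real.rpow_def_of_pos hx0]
    -- boundedness of f on Ioc t₁ 1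
    have hbdd : ∀ x ∈ Set.Ioc t₁ 1, f x ≤ t₁⁻¹ ^ p 1 * t₁⁻¹ := by
      intro x hx
      have hx0 : 0 < x := lt_trans ht₁ hx.1
      have hx1 : x ≤ 1 := hx.2
      have hxm : x ∈ Set.Ioc (0:ℝ) 1 := ⟨hx0, hx1⟩
      have hαx := hαb x hxm
      have hxinv : x⁻¹ ≤ t₁⁻¹ := by
        rw [inv_le_inv₀ hx0 ht₁]; exact hx.1.le
      have hb : t₁ ^ (1 - 1 / p t₁) * x ^ (-(1 - 1 / p x)) ≤ t₁⁻¹ := by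
        have h5 : x ^ (-(1 - 1 / p x)) ≤ x ^ (-1 : ℝ) :=
          Real.rpow_le_rpow_of_exponent_ge hx0 hx1 (by linarith [hαx.2])
        rw [Real.rpow_neg_one] at h5
        calc t₁ ^ (1 - 1 / p t₁) * x ^ (-(1 - 1 / p x))
            ≤ 1 * x⁻¹ := mul_le_mul ht₁α1 h5 (Real.rpow_nonneg hx0.le _) one_pos.le
          _ = x⁻¹ := one_mul _
          _ ≤ t₁⁻¹ := hxinv
      have ht₁inv1 : (1:ℝ) ≤ t₁⁻¹ := (one_le_inv₀ ht₁).mpr ht₁1.le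
      have hb0 : 0 ≤ t₁ ^ (1 - 1 / p t₁) * x ^ (-(1 - 1 / p x)) := by positivity
      have hpow : (t₁ ^ (1 - 1 / p t₁) * x ^ (-(1 - 1 / p x))) ^ p x ≤ t₁⁻¹ ^ p 1 := by
        calc (t₁ ^ (1 - 1 / p t₁) * x ^ (-(1 - 1 / p x))) ^ p x
            ≤ t₁⁻¹ ^ p x := Real.rpow_le_rpow hb0 hb
              (le_trans one_pos.le (hp1 x hxm))
          _ ≤ t₁⁻¹ ^ p 1 := Real.rpow_le_rpow_of_exponent_le ht₁inv1
              (hmono hxm ⟨one_pos, le_rfl⟩ hx1)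
      calc f x = (t₁ ^ (1 - 1 / p t₁) * x ^ (-(1 - 1 / p x))) ^ p x * x⁻¹ := by
            rw [hf]; ring
        _ ≤ t₁⁻¹ ^ p 1 * t₁⁻¹ :=
            mul_le_mul hpow hxinv (inv_nonneg.mpr hx0.le) (Real.rpow_nonneg (by positivity) _)
    have hf0 : ∀ x ∈ Set.Ioc t₁ 1, 0 ≤ f x := by
      intro x hx
      have hx0 : 0 < x := lt_trans ht₁ hx.1
      rw [hf]
      positivity
    have hfint : IntegrableOn f (Set.Ioc t₁ 1) := by
      apply Integrable.mono' (integrable_const (t₁⁻¹ ^ p 1 * t₁⁻¹)) hfm.aestronglyMeasurable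
      rw [ae_restrict_iff' measurableSet_Ioc]
      refine Filter.Eventually.of_forall (fun x hx => ?_)
      rw [Real.norm_eq_abs, abs_of_nonneg (hf0 x hx)]
      exact hbdd x hx
    -- pointwise lower bound on Ioc t₂ (2 t₂)
    have hlow : ∀ x ∈ Set.Ioc t₂ (2 * t₂), K / 2 * x⁻¹ ≤ f x := by
      intro x hx
      have hx0 : 0 < x := lt_trans ht₂ hx.1
      have hx1 : x ≤ 1 := le_trans hx.2 h2t₂1.le
      have hxm : x ∈ Set.Ioc (0:ℝ) 1 := ⟨hx0, hx1⟩
      have hpx : p t₂ ≤ p x := hmono ht₂m hxm hx.1.le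
      have hpt₂ : 0 < p t₂ := lt_of_lt_of_le one_pos (hp1 t₂ ht₂m)
      have hαle : 1 - 1 / p t₂ ≤ 1 - 1 / p x := by
        have := one_div_le_one_div_of_le hpt₂ hpx
        linarith
      have h5 : x ^ (-(1 - 1 / p t₂)) ≤ x ^ (-(1 - 1 / p x)) :=
        Real.rpow_le_rpow_of_exponent_ge hx0 hx1 (by linarith)
      have h6 : (2 * t₂) ^ (-(1 - 1 / p t₂)) ≤ x ^ (-(1 - 1 / p t₂)) :=
        Real.rpow_le_rpow_of_nonpos hx0 hx.2 (by linarith)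
      have h7 : (1 / 2 : ℝ) * t₂ ^ (-(1 - 1 / p t₂)) ≤ (2 * t₂) ^ (-(1 - 1 / p t₂)) := by
        rw [Real.mul_rpow (by norm_num) ht₂.le]
        have h8 : (2:ℝ) ^ (-1:ℝ) ≤ (2:ℝ) ^ (-(1 - 1 / p t₂)) :=
          Real.rpow_le_rpow_of_exponent_le one_le_two (by linarith)
        rw [Real.rpow_neg_one] at h8
        have := Real.rpow_nonneg ht₂.le (-(1 - 1 / p t₂))
        have h9 : ((2:ℝ)⁻¹) = (1/2 : ℝ) := by norm_num
        nlinarith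
      have hb : K / 2 ≤ t₁ ^ (1 - 1 / p t₁) * x ^ (-(1 - 1 / p x)) := by
        have ht₁p : 0 ≤ t₁ ^ (1 - 1 / p t₁) := Real.rpow_nonneg ht₁.le _
        have hchain : (1/2:ℝ) * t₂ ^ (-(1 - 1 / p t₂)) ≤ x ^ (-(1 - 1 / p x)) :=
          le_trans h7 (le_trans h6 h5)
        calc K / 2 = t₁ ^ (1 - 1 / p t₁) * ((1/2) * t₂ ^ (-(1 - 1 / p t₂))) := by
              rw [hKdef]; ring
          _ ≤ t₁ ^ (1 - 1 / p t₁) * x ^ (-(1 - 1 / p x)) :=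
              mul_le_mul_of_nonneg_left hchain ht₁p
      have hK2 : (1:ℝ) ≤ K / 2 := by linarith
      have hb1 : (1:ℝ) ≤ t₁ ^ (1 - 1 / p t₁) * x ^ (-(1 - 1 / p x)) := le_trans hK2 hb
      have hpow : t₁ ^ (1 - 1 / p t₁) * x ^ (-(1 - 1 / p x)) ≤
          (t₁ ^ (1 - 1 / p t₁) * x ^ (-(1 - 1 / p x))) ^ p x := by
        nth_rewrite 1 [← Real.rpow_one (t₁ ^ (1 - 1 / p t₁) * x ^ (-(1 - 1 / p x)))]
        exact Real.rpow_le_rpow_of_exponent_le hb1 (hp1 x hxm)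
      have : K / 2 ≤ (t₁ ^ (1 - 1 / p t₁) * x ^ (-(1 - 1 / p x))) ^ p x :=
        le_trans hb hpow
      rw [hf]
      simp only
      rw [div_eq_mul_inv]
      exact mul_le_mul_of_nonneg_right this (inv_nonneg.mpr hx0.le)
    -- the lower integral computes to (K/2) log 2
    have hgint : IntegrableOn (fun x : ℝ => K / 2 * x⁻¹) (Set.Ioc t₂ (2 * t₂)) := by
      have h0 : ∀ x : ℝ, x ∈ Set.uIcc t₂ (2 * t₂) → x ≠ 0 := by
        intro x hx
        rw [Set.uIcc_of_le (by linarith)] at hx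
        exact ne_of_gt (lt_of_lt_of_le ht₂ hx.1)
      have := (intervalIntegral.intervalIntegrable_inv h0 continuousOn_id (μ := volume)).const_mul (K / 2)
      rw [intervalIntegrable_iff_integrableOn_Ioc_of_le (by linarith)] at this
      exact this
    have hgval : ∫ x in Set.Ioc t₂ (2 * t₂), K / 2 * x⁻¹ = K / 2 * Real.log 2 := by
      rw [MeasureTheory.integral_const_mul]
      rw [← intervalIntegral.integral_of_le (by linarith : t₂ ≤ 2 * t₂)]
      rw [integral_inv (by
        intro h
        rw [Set.uIcc_of_le (by linarith)] at h
        exact absurd h.1 (not_le.mpr ht₂))]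
      rw [show (2 * t₂) / t₂ = 2 by field_simp]
    -- chain of inequalities
    have hsub2 : Set.Ioc t₂ (2 * t₂) ⊆ Set.Ioc t₁ 1 :=
      Set.Ioc_subset_Ioc h12 h2t₂1.le
    have hstep1 : ∫ x in Set.Ioc t₂ (2 * t₂), K / 2 * x⁻¹ ≤ ∫ x in Set.Ioc t₂ (2 * t₂), f x :=
      setIntegral_mono_on hgint (hfint.mono_set hsub2) measurableSet_Ioc hlow
    have hstep2 : ∫ x in Set.Ioc t₂ (2 * t₂), f x ≤ ∫ x in Set.Ioc t₁ 1, f x := by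
      apply setIntegral_mono_set hfint
      · rw [Filter.EventuallyLE, ae_restrict_iff' measurableSet_Ioc]
        exact Filter.Eventually.of_forall (fun x hx => hf0 x hx)
      · exact Filter.Eventually.of_forall (fun x hx => hsub2 hx)
    have hfinal : K / 2 * Real.log 2 ≤ C := by
      rw [← hgval]
      exact le_trans hstep1 (le_trans hstep2 hCint)
    have hKle : K ≤ 2 * C / Real.log 2 := by
      rw [le_div_iff₀ hlog2]
      nlinarith
    exact le_trans hKle (le_max_right _ _)
end

section
/- Let p : (0,1) → [1,∞) be nondecreasing with p(1) < ∞ and suppose ∫_a^1 (a^{1/p'(a)} x^{-1/p'(x)})^{p(x)} dx/x ≤ C for all a ∈ (0,1). Then there exists C₄ > 0 such that ∫_a^1 x^{-p⁺/p'(x)} dx/x ≤ C₄ a^{-p⁺/p'(a)} for all a ∈ (0,1), where p⁺ = sup_{x∈(0,1)} p(x). -/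
open MeasureTheory Set Real

/-!
Write `φ(x) = x^{-1/p'(x)}`, so `1 ≤ φ(x) ≤ 1/x` on `(0, 1]`. First, `φ` is almost decreasing:
if `φ(x) > 2 φ(a)` for some `a < x`, then `x < 1/2`, and since `p` is nondecreasing,
`φ ≥ φ(x)/2` on `(x, 2x]`; there the modular integrand at `a` is at least `φ(x)/(2 φ(a)) · t⁻¹`,
so integrating over `(x, 2x]` gives `φ(x)/(2 φ(a)) · log 2 ≤ C`. Hence `φ(x) ≤ K φ(a)` with
`K = max 2 (2C / log 2)`. Second, as `φ(x)/(K φ(a)) ≤ 1` and `p(x) ≤ p⁺`,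
`φ(x)^{p⁺} ≤ (K φ(a))^{p⁺} (φ(x)/φ(a))^{p(x)}`, and integrating against `dx/x` bounds the left
side by `K^{p⁺} C φ(a)^{p⁺}`.
-/

lemma one_sub_one_div_mem_Icc {y : ℝ} (hy : 1 ≤ y) : 1 - 1 / y ∈ Icc (0 : ℝ) 1 := by
  have : 0 < 1 / y := by positivity
  have : 1 / y ≤ 1 := (div_le_one (by linarith)).2 hy
  constructor <;> linarith

lemma rpow_one_sub_one_div_mem_Icc {a y : ℝ} (ha : 0 < a) (ha1 : a ≤ 1) (hy : 1 ≤ y) :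
    a ^ (1 - 1 / y) ∈ Icc (0 : ℝ) 1 :=
  ⟨rpow_nonneg ha.le _, rpow_le_one ha.le ha1 (one_sub_one_div_mem_Icc hy).1⟩

lemma rpow_neg_le_inv {x e : ℝ} (hx : 0 < x) (hx1 : x ≤ 1) (he : e ≤ 1) : x ^ (-e) ≤ x⁻¹ := by
  simpa [rpow_neg_one] using rpow_le_rpow_of_exponent_ge hx hx1 (neg_le_neg he)

lemma rpow_neg_div_two_le {x t e : ℝ} (hx : 0 < x) (ht : 0 < t) (ht2 : t ≤ 2 * x)
    (he : e ∈ Icc (0 : ℝ) 1) : x ^ (-e) / 2 ≤ t ^ (-e) := by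
  have h2 : (2 : ℝ)⁻¹ ≤ 2 ^ (-e) := by
    simpa [rpow_neg_one] using rpow_le_rpow_of_exponent_le one_le_two (neg_le_neg he.2)
  calc x ^ (-e) / 2 = 2⁻¹ * x ^ (-e) := by ring
    _ ≤ 2 ^ (-e) * x ^ (-e) := by gcongr
    _ = (2 * x) ^ (-e) := (mul_rpow zero_le_two hx.le).symm
    _ ≤ t ^ (-e) := rpow_le_rpow_of_nonpos ht ht2 (neg_nonpos.2 he.1)

lemma integral_Ioc_two_mul_inv {x : ℝ} (hx : 0 < x) : ∫ t in Ioc x (2 * x), t⁻¹ = log 2 := by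
  rw [← intervalIntegral.integral_of_le (by linarith), integral_inv_of_pos hx (by linarith),
    mul_div_cancel_right₀ _ hx.ne']

lemma mul_log_two_le_setIntegral {f : ℝ → ℝ} {x B : ℝ} (hx : 0 < x)
    (hf : IntegrableOn f (Ioc x (2 * x))) (hB : ∀ t ∈ Ioc x (2 * x), B * t⁻¹ ≤ f t) :
    B * log 2 ≤ ∫ t in Ioc x (2 * x), f t := by
  have hinv : IntegrableOn (fun t : ℝ => t⁻¹) (Ioc x (2 * x)) :=
    ((continuousOn_inv₀.mono fun t ht => (hx.trans_le ht.1).ne').integrableOn_Icc).mono_set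
      Ioc_subset_Icc_self
  rw [← integral_Ioc_two_mul_inv hx, ← integral_const_mul]
  exact setIntegral_mono_on (hinv.const_mul B) hf measurableSet_Ioc hB

lemma rpow_le_mul_rpow_div {u v c q M : ℝ} (hu : 0 < u) (hv : 0 < v) (hc : 1 ≤ c)
    (huv : u ≤ c * v) (hq : 0 ≤ q) (hqM : q ≤ M) : u ^ M ≤ (c * v) ^ M * (u / v) ^ q := by
  have hcv : 0 < c * v := by positivity
  calc u ^ M = (c * v) ^ M * (u / (c * v)) ^ M := by
        rw [← mul_rpow hcv.le (by positivity), mul_div_cancel₀ _ hcv.ne']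
    _ ≤ (c * v) ^ M * (u / (c * v)) ^ q := by
        gcongr (c * v) ^ M * ?_
        exact rpow_le_rpow_of_exponent_ge (by positivity) ((div_le_one hcv).2 huv) hqM
    _ ≤ (c * v) ^ M * (u / v) ^ q := by
        gcongr
        exact le_mul_of_one_le_left hv.le hc

lemma rpow_neg_mul_le_mul_rpow {x a d e q K M : ℝ} (hx : 0 < x) (ha : 0 < a) (hK : 1 ≤ K)
    (hxa : x ^ (-e) ≤ K * a ^ (-d)) (hq : 0 ≤ q) (hqM : q ≤ M) :
    x ^ (-(M * e)) ≤ K ^ M * a ^ (-(M * d)) * (a ^ d * x ^ (-e)) ^ q := by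
  have h := rpow_le_mul_rpow_div (rpow_pos_of_pos hx (-e)) (rpow_pos_of_pos ha (-d)) hK hxa hq hqM
  rwa [← rpow_mul hx.le, mul_rpow (by linarith) (rpow_nonneg ha.le _), ← rpow_mul ha.le,
    rpow_neg ha.le d, div_inv_eq_mul, mul_comm (x ^ (-e)), mul_comm (-e), mul_comm (-d),
    ← neg_mul_eq_mul_neg, ← neg_mul_eq_mul_neg] at h

section

variable {p : ℝ → ℝ}

lemma integrableOn_modular (hmono : MonotoneOn p (Ioc 0 1))
    (hp1 : ∀ x ∈ Ioc (0 : ℝ) 1, 1 ≤ p x) {a b : ℝ} (ha : 0 < a) (hb : b ∈ Icc (0 : ℝ) 1) :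
    IntegrableOn (fun x => (b * x ^ (-(1 - 1 / p x))) ^ p x / x) (Ioc a 1) := by
  have hp : AEMeasurable p (volume.restrict (Ioc a 1)) :=
    aemeasurable_restrict_of_monotoneOn measurableSet_Ioc
      (hmono.mono (Ioc_subset_Ioc_left ha.le))
  refine IntegrableOn.of_bound measure_Ioc_lt_top
    (by fun_prop : AEMeasurable _ _).aestronglyMeasurable (a⁻¹ ^ p 1 * a⁻¹) ?_
  filter_upwards [ae_restrict_mem measurableSet_Ioc] with x hx
  have hx0 : 0 < x := ha.trans hx.1
  have hxI : x ∈ Ioc (0 : ℝ) 1 := ⟨hx0, hx.2⟩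
  have hbase : b * x ^ (-(1 - 1 / p x)) ≤ a⁻¹ :=
    calc b * x ^ (-(1 - 1 / p x)) ≤ 1 * x⁻¹ :=
          mul_le_mul hb.2 (rpow_neg_le_inv hx0 hx.2 (one_sub_one_div_mem_Icc (hp1 x hxI)).2)
            (by positivity) zero_le_one
      _ ≤ a⁻¹ := by rw [one_mul]; exact inv_anti₀ ha hx.1.le
  have ha1 : 1 ≤ a⁻¹ := one_le_inv_iff₀.2 ⟨ha, (hx.1.trans_le hx.2).le⟩
  rw [norm_of_nonneg (by have := hb.1; positivity), div_eq_mul_inv]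
  gcongr
  · exact (rpow_le_rpow (by have := hb.1; positivity) hbase (by linarith [hp1 x hxI])).trans
      (rpow_le_rpow_of_exponent_le ha1 (hmono hxI ⟨one_pos, le_rfl⟩ hx.2))
  · exact hx.1.le

lemma rpow_neg_div_two_le_of_monotoneOn (hmono : MonotoneOn p (Ioc 0 1))
    (hp1 : ∀ x ∈ Ioc (0 : ℝ) 1, 1 ≤ p x) {x t : ℝ} (hx : 0 < x) (hxt : x ≤ t)
    (ht2 : t ≤ 2 * x) (ht1 : t ≤ 1) :
    x ^ (-(1 - 1 / p x)) / 2 ≤ t ^ (-(1 - 1 / p t)) := by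
  have hxI : x ∈ Ioc (0 : ℝ) 1 := ⟨hx, hxt.trans ht1⟩
  have htI : t ∈ Ioc (0 : ℝ) 1 := ⟨hx.trans_le hxt, ht1⟩
  have hpx : 0 < p x := zero_lt_one.trans_le (hp1 x hxI)
  calc x ^ (-(1 - 1 / p x)) / 2 ≤ t ^ (-(1 - 1 / p x)) :=
        rpow_neg_div_two_le hx htI.1 ht2 (one_sub_one_div_mem_Icc (hp1 x hxI))
    _ ≤ t ^ (-(1 - 1 / p t)) := by
        refine rpow_le_rpow_of_exponent_ge htI.1 ht1 (neg_le_neg (sub_le_sub_left ?_ 1))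
        exact one_div_le_one_div_of_le hpx (hmono hxI htI hxt)

lemma div_mul_inv_le_modular_integrand (hmono : MonotoneOn p (Ioc 0 1))
    (hp1 : ∀ x ∈ Ioc (0 : ℝ) 1, 1 ≤ p x) {a x t : ℝ} (ha : 0 < a) (hx : 0 < x)
    (hxa : 2 * a ^ (-(1 - 1 / p a)) ≤ x ^ (-(1 - 1 / p x))) (hxt : x ≤ t) (ht2 : t ≤ 2 * x)
    (ht1 : t ≤ 1) :
    x ^ (-(1 - 1 / p x)) / (2 * a ^ (-(1 - 1 / p a))) * t⁻¹
      ≤ (a ^ (1 - 1 / p a) * t ^ (-(1 - 1 / p t))) ^ p t / t := by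
  have ht : 0 < t := hx.trans_le hxt
  have hB : 1 ≤ x ^ (-(1 - 1 / p x)) / (2 * a ^ (-(1 - 1 / p a))) :=
    (one_le_div (by positivity)).2 hxa
  have hBt : x ^ (-(1 - 1 / p x)) / (2 * a ^ (-(1 - 1 / p a)))
      ≤ a ^ (1 - 1 / p a) * t ^ (-(1 - 1 / p t)) := by
    rw [← inv_inv (a ^ (1 - 1 / p a)), ← rpow_neg ha.le, inv_mul_eq_div,
      div_le_div_iff₀ (by positivity) (by positivity)]
    have := mul_le_mul_of_nonneg_right (rpow_neg_div_two_le_of_monotoneOn hmono hp1 hx hxt ht2 ht1)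
      (rpow_pos_of_pos ha (-(1 - 1 / p a))).le
    linarith
  rw [div_eq_mul_inv]
  refine mul_le_mul_of_nonneg_right (hBt.trans (self_le_rpow_of_one_le (hB.trans hBt) ?_))
    (inv_nonneg.2 ht.le)
  exact hp1 t ⟨ht, ht1⟩

lemma rpow_neg_le_mul_of_modular_le (hmono : MonotoneOn p (Ioc 0 1))
    (hp1 : ∀ x ∈ Ioc (0 : ℝ) 1, 1 ≤ p x) {a C : ℝ} (ha : 0 < a)
    (hC : ∫ x in Ioc a 1, (a ^ (1 - 1 / p a) * x ^ (-(1 - 1 / p x))) ^ p x / x ≤ C)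
    {x : ℝ} (hx : x ∈ Ioc a 1) :
    x ^ (-(1 - 1 / p x)) ≤ max 2 (2 * C / log 2) * a ^ (-(1 - 1 / p a)) := by
  set φx := x ^ (-(1 - 1 / p x))
  set φa := a ^ (-(1 - 1 / p a))
  have hx0 : 0 < x := ha.trans hx.1
  have ha1 : a ≤ 1 := hx.1.le.trans hx.2
  have hpa := hp1 a ⟨ha, ha1⟩
  have hφa : 1 ≤ φa := one_le_rpow_of_pos_of_le_one_of_nonpos ha ha1
    (neg_nonpos.2 (one_sub_one_div_mem_Icc hpa).1)
  by_cases hsmall : φx ≤ 2 * φa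
  · exact hsmall.trans (by gcongr; exact le_max_left _ _)
  push Not at hsmall
  have hx2 : 2 * x ≤ 1 := by
    have := rpow_neg_le_inv hx0 hx.2 (one_sub_one_div_mem_Icc (hp1 x ⟨hx0, hx.2⟩)).2
    have := (lt_inv_comm₀ two_pos hx0).1 (by linarith : 2 < x⁻¹)
    linarith
  set B := φx / (2 * φa)
  have hsub : Ioc x (2 * x) ⊆ Ioc a 1 := Ioc_subset_Ioc hx.1.le hx2
  have hmod := integrableOn_modular hmono hp1 ha (rpow_one_sub_one_div_mem_Icc ha ha1 hpa)
  have hBC : B * log 2 ≤ C :=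
    calc B * log 2 ≤ _ := mul_log_two_le_setIntegral hx0 (hmod.mono_set hsub) fun t ht =>
          div_mul_inv_le_modular_integrand hmono hp1 ha hx0 hsmall.le ht.1.le ht.2 (ht.2.trans hx2)
      _ ≤ _ := setIntegral_mono_set hmod (ae_restrict_of_forall_mem measurableSet_Ioc
          fun t ht => by have := ha.trans ht.1; positivity) hsub.eventuallyLE
      _ ≤ C := hC
  calc φx = B * log 2 * (2 * φa) / log 2 := by
        have : φa ≠ 0 := by positivity
        simp only [B]; field_simp
    _ ≤ C * (2 * φa) / log 2 := by gcongr
    _ = 2 * C / log 2 * φa := by ring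
    _ ≤ max 2 (2 * C / log 2) * φa := by gcongr; exact le_max_right _ _

lemma le_sSup_image_Ioo_of_monotoneOn (hmono : MonotoneOn p (Ioc 0 1)) {x : ℝ}
    (hx : x ∈ Ioo (0 : ℝ) 1) : p x ≤ sSup (p '' Ioo 0 1) :=
  le_csSup ⟨p 1, forall_mem_image.2 fun _ hy => hmono ⟨hy.1, hy.2.le⟩ ⟨one_pos, le_rfl⟩ hy.2.le⟩
    (mem_image_of_mem p hx)

lemma setIntegral_rpow_neg_mul_le_of_modular_le (hmono : MonotoneOn p (Ioc 0 1))
    (hp1 : ∀ x ∈ Ioc (0 : ℝ) 1, 1 ≤ p x) {a C M : ℝ} (ha : a ∈ Ioo (0 : ℝ) 1)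
    (hC : ∫ x in Ioc a 1, (a ^ (1 - 1 / p a) * x ^ (-(1 - 1 / p x))) ^ p x / x ≤ C)
    (hpM : ∀ x ∈ Ioo a 1, p x ≤ M) :
    ∫ x in Ioc a 1, x ^ (-(M * (1 - 1 / p x))) / x
      ≤ max 2 (2 * C / log 2) ^ M * C * a ^ (-(M * (1 - 1 / p a))) := by
  set K := max 2 (2 * C / log 2)
  have hK : 1 ≤ K := one_le_two.trans (le_max_left _ _)
  have hmod := integrableOn_modular hmono hp1 ha.1
    (rpow_one_sub_one_div_mem_Icc ha.1 ha.2.le (hp1 a ⟨ha.1, ha.2.le⟩))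
  have hpointwise : ∀ x ∈ Ioo a 1, x ^ (-(M * (1 - 1 / p x))) / x ≤ K ^ M *
      a ^ (-(M * (1 - 1 / p a))) * ((a ^ (1 - 1 / p a) * x ^ (-(1 - 1 / p x))) ^ p x / x) := by
    intro x hx
    have hx0 : 0 < x := ha.1.trans hx.1
    rw [← mul_div_assoc]
    refine div_le_div_of_nonneg_right (rpow_neg_mul_le_mul_rpow hx0 ha.1 hK ?_ ?_ (hpM x hx)) hx0.le
    · exact rpow_neg_le_mul_of_modular_le hmono hp1 ha.1 hC ⟨hx.1, hx.2.le⟩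
    · exact zero_le_one.trans (hp1 x ⟨hx0, hx.2.le⟩)
  rw [integral_Ioc_eq_integral_Ioo]
  calc ∫ x in Ioo a 1, x ^ (-(M * (1 - 1 / p x))) / x
      ≤ ∫ x in Ioo a 1, K ^ M * a ^ (-(M * (1 - 1 / p a))) *
          ((a ^ (1 - 1 / p a) * x ^ (-(1 - 1 / p x))) ^ p x / x) := by
        refine integral_mono_of_nonneg ?_ ((hmod.mono_set Ioo_subset_Ioc_self).const_mul _) ?_
        all_goals filter_upwards [ae_restrict_mem measurableSet_Ioo] with x hx
        · have := ha.1.trans hx.1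
          positivity
        · exact hpointwise x hx
    _ = K ^ M * a ^ (-(M * (1 - 1 / p a))) *
          ∫ x in Ioc a 1, (a ^ (1 - 1 / p a) * x ^ (-(1 - 1 / p x))) ^ p x / x := by
        rw [integral_const_mul, integral_Ioc_eq_integral_Ioo]
    _ ≤ K ^ M * a ^ (-(M * (1 - 1 / p a))) * C :=
        mul_le_mul_of_nonneg_left hC
          (mul_nonneg (rpow_nonneg (zero_le_one.trans hK) _) (rpow_nonneg ha.1.le _))
    _ = K ^ M * C * a ^ (-(M * (1 - 1 / p a))) := by ring

end

/-- From the modular integral condition one derives the Zygmund-type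
condition for the power `p⁺/p'(x)`. -/
theorem stmt_9 (p : ℝ → ℝ) (C : ℝ)
    (hmono : MonotoneOn p (Set.Ioc 0 1))
    (hp1 : ∀ x ∈ Set.Ioc (0:ℝ) 1, 1 ≤ p x)
    (hC : 0 < C)
    (hint : ∀ a ∈ Set.Ioo (0:ℝ) 1,
      ∫ x in Set.Ioc a 1,
        (a ^ (1 - 1 / p a) * x ^ (-(1 - 1 / p x))) ^ p x / x ≤ C) :
    ∃ C₄ > 0, ∀ a ∈ Set.Ioo (0:ℝ) 1,
      ∫ x in Set.Ioc a 1,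
          x ^ (-(sSup (p '' Set.Ioo 0 1) * (1 - 1 / p x))) / x
        ≤ C₄ * a ^ (-(sSup (p '' Set.Ioo 0 1) * (1 - 1 / p a))) := by
  have hK : 0 < max 2 (2 * C / log 2) := two_pos.trans_le (le_max_left _ _)
  refine ⟨max 2 (2 * C / log 2) ^ sSup (p '' Ioo 0 1) * C, by positivity, fun a ha => ?_⟩
  exact setIntegral_rpow_neg_mul_le_of_modular_le hmono hp1 ha (hint a ha)
    fun x hx => le_sSup_image_Ioo_of_monotoneOn hmono ⟨ha.1.trans hx.1, hx.2⟩
end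

section
/- Let p : (0,1) → [1,∞) be nondecreasing with p(1) < ∞ and assume ∫_a^1 (a^{1/p'(a)} x^{-1/p'(x)})^{p(x)} dx/x ≤ C for all a ∈ (0,1). Then p(0⁺) := lim_{x→0⁺} p(x) > 1. -/
open MeasureTheory Set Real

/-!
Write `ε(x) = 1 - 1 / p(x) = 1 / p'(x)`, a nondecreasing function with values in `[0, 1)`.
For `a < x ≤ b ≤ 1` the base of the integrand is at least `(a / b) ^ ε(a) ≤ 1`, and `p(x) ≤ p(1)`,
so the integrand is at least `(a / b) ^ (ε(a) p(1)) / x`. Choosing `b = a e^T` with `T = e C`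
(possible once `a ≤ e^(-T)`), the integral condition gives `e^(-T ε(a) p(1)) T ≤ C`, that is
`ε(a) ≥ 1 / (e C p(1))`. By monotonicity this bound holds on all of `(0, 1)`, so `p` stays above
`1 / (1 - 1 / (e C p(1))) > 1`.
-/

theorem mul_log_div_le_setIntegral_Ioc {f : ℝ → ℝ} {a b c k : ℝ} (ha : 0 < a) (hab : a ≤ b)
    (hbc : b ≤ c) (hf : IntegrableOn f (Ioc a c)) (hf₀ : ∀ x ∈ Ioc a c, 0 ≤ f x)
    (hfk : ∀ x ∈ Ioc a b, k / x ≤ f x) :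
    k * log (b / a) ≤ ∫ x in Ioc a c, f x := by
  have hk : IntegrableOn (fun x => k / x) (Ioc a b) :=
    (continuousOn_const.div continuousOn_id fun x hx => (ha.trans_le hx.1).ne').integrableOn_Icc
      |>.mono_set Ioc_subset_Icc_self
  calc k * log (b / a) = ∫ x in Ioc a b, k / x := by
        rw [← intervalIntegral.integral_of_le hab, ← integral_inv_of_pos ha (ha.trans_le hab),
          ← intervalIntegral.integral_const_mul]
        rfl
    _ ≤ ∫ x in Ioc a b, f x :=
        setIntegral_mono_on hk (hf.mono_set (Ioc_subset_Ioc_right hbc)) measurableSet_Ioc hfk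
    _ ≤ ∫ x in Ioc a c, f x :=
        setIntegral_mono_set hf ((ae_restrict_iff' measurableSet_Ioc).2 (.of_forall hf₀))
          (Ioc_subset_Ioc_right hbc).eventuallyLE

theorem one_sub_one_div_nonneg {q : ℝ} (hq : 1 ≤ q) : 0 ≤ 1 - 1 / q :=
  sub_nonneg.2 (div_le_one_of_le₀ hq (zero_le_one.trans hq))

theorem one_sub_one_div_le_one_sub_one_div {q r : ℝ} (hq : 0 < q) (hqr : q ≤ r) :
    1 - 1 / q ≤ 1 - 1 / r :=
  sub_le_sub_left (one_div_le_one_div_of_le hq hqr) 1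

theorem one_lt_csInf_of_le_one_sub_one_div {S : Set ℝ} (hS : S.Nonempty) {m : ℝ} (hm : 0 < m)
    (h : ∀ y ∈ S, 0 < y ∧ m ≤ 1 - 1 / y) : 1 < sInf S := by
  obtain ⟨y₀, hy₀⟩ := hS
  have hm₁ : 0 < 1 - m := by linarith [(h y₀ hy₀).2, one_div_pos.2 (h y₀ hy₀).1]
  calc 1 < 1 / (1 - m) := one_lt_one_div hm₁ (by linarith)
    _ ≤ sInf S := le_csInf ⟨y₀, hy₀⟩ fun y hy =>
        (one_div_le hm₁ (h y hy).1).2 (by linarith [(h y hy).2])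

noncomputable def modularKernel (p : ℝ → ℝ) (a x : ℝ) : ℝ :=
  (a ^ (1 - 1 / p a) * x ^ (-(1 - 1 / p x))) ^ p x / x

section

variable {p : ℝ → ℝ} {a b x : ℝ}

theorem modularKernel_nonneg (ha : 0 ≤ a) (hx : 0 ≤ x) : 0 ≤ modularKernel p a x := by
  unfold modularKernel
  positivity

theorem modularKernel_le (hmono : MonotoneOn p (Ioc 0 1)) (hp1 : ∀ x ∈ Ioc (0 : ℝ) 1, 1 ≤ p x)
    (ha : 0 < a) (hx : x ∈ Ioc a 1) :
    modularKernel p a x ≤ a⁻¹ ^ p 1 / a := by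
  have hx₀ : 0 < x := ha.trans hx.1
  have hx' : x ∈ Ioc (0 : ℝ) 1 := ⟨hx₀, hx.2⟩
  have hpx : 1 ≤ p x := hp1 x hx'
  have hbase : a ^ (1 - 1 / p a) * x ^ (-(1 - 1 / p x)) ≤ a⁻¹ :=
    calc a ^ (1 - 1 / p a) * x ^ (-(1 - 1 / p x)) ≤ 1 * x ^ (-1 : ℝ) := by
          refine mul_le_mul ?_ ?_ (by positivity) zero_le_one
          · exact rpow_le_one ha.le (hx.1.le.trans hx.2)
              (one_sub_one_div_nonneg (hp1 a ⟨ha, hx.1.le.trans hx.2⟩))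
          · exact rpow_le_rpow_of_exponent_ge hx₀ hx.2
              (by linarith [one_div_pos.2 (zero_lt_one.trans_le hpx)])
      _ ≤ a⁻¹ := by rw [one_mul, rpow_neg_one]; exact inv_anti₀ ha hx.1.le
  unfold modularKernel
  calc (a ^ (1 - 1 / p a) * x ^ (-(1 - 1 / p x))) ^ p x / x ≤ a⁻¹ ^ p x / x := by
        gcongr
    _ ≤ a⁻¹ ^ p 1 / x := by
        gcongr
        · exact (one_le_inv₀ ha).2 (hx.1.le.trans hx.2)
        · exact hmono hx' ⟨zero_lt_one, le_rfl⟩ hx.2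
    _ ≤ a⁻¹ ^ p 1 / a := by gcongr; exact hx.1.le

-- Integrability is what gives the hypothesis content: a non-integrable function has integral `0`.
theorem integrableOn_modularKernel (hmono : MonotoneOn p (Ioc 0 1))
    (hp1 : ∀ x ∈ Ioc (0 : ℝ) 1, 1 ≤ p x) (ha : 0 < a) :
    IntegrableOn (modularKernel p a) (Ioc a 1) := by
  have hp : AEMeasurable p (volume.restrict (Ioc a 1)) :=
    aemeasurable_restrict_of_monotoneOn measurableSet_Ioc (hmono.mono (Ioc_subset_Ioc_left ha.le))
  refine .of_bound measure_Ioc_lt_top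
    (by unfold modularKernel; exact (by fun_prop : AEMeasurable _ _).aestronglyMeasurable)
    (a⁻¹ ^ p 1 / a) ?_
  filter_upwards [ae_restrict_mem measurableSet_Ioc] with x hx
  rw [Real.norm_of_nonneg (modularKernel_nonneg ha.le (ha.trans hx.1).le)]
  exact modularKernel_le hmono hp1 ha hx

theorem le_modularKernel (hmono : MonotoneOn p (Ioc 0 1)) (hp1 : ∀ x ∈ Ioc (0 : ℝ) 1, 1 ≤ p x)
    (ha : 0 < a) (hb : b ≤ 1) (hx : x ∈ Ioc a b) :
    (a / b) ^ ((1 - 1 / p a) * p 1) / x ≤ modularKernel p a x := by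
  have hx₀ : 0 < x := ha.trans hx.1
  have hx' : x ∈ Ioc (0 : ℝ) 1 := ⟨hx₀, hx.2.trans hb⟩
  have ha' : a ∈ Ioc (0 : ℝ) 1 := ⟨ha, hx.1.le.trans hx'.2⟩
  have hpa := hp1 a ha'
  have hb₀ : 0 < b := ha.trans (hx.1.trans_le hx.2)
  have hbase : (a / b) ^ (1 - 1 / p a) ≤ a ^ (1 - 1 / p a) * x ^ (-(1 - 1 / p x)) :=
    calc (a / b) ^ (1 - 1 / p a) ≤ (a / x) ^ (1 - 1 / p a) := by
          gcongr
          · exact one_sub_one_div_nonneg hpa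
          · exact hx.2
      _ = a ^ (1 - 1 / p a) * x ^ (-(1 - 1 / p a)) := by
          rw [div_rpow ha.le hx₀.le, rpow_neg hx₀.le, div_eq_mul_inv]
      _ ≤ a ^ (1 - 1 / p a) * x ^ (-(1 - 1 / p x)) := by
          gcongr a ^ _ * ?_
          exact rpow_le_rpow_of_exponent_ge hx₀ hx'.2 (neg_le_neg
            (one_sub_one_div_le_one_sub_one_div (zero_lt_one.trans_le hpa) (hmono ha' hx' hx.1.le)))
  unfold modularKernel
  calc (a / b) ^ ((1 - 1 / p a) * p 1) / x = ((a / b) ^ (1 - 1 / p a)) ^ p 1 / x := by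
        rw [rpow_mul (div_pos ha hb₀).le]
    _ ≤ ((a / b) ^ (1 - 1 / p a)) ^ p x / x := by
        refine div_le_div_of_nonneg_right ?_ hx₀.le
        refine rpow_le_rpow_of_exponent_ge (by positivity) ?_
          (hmono hx' ⟨zero_lt_one, le_rfl⟩ hx'.2)
        exact rpow_le_one (div_pos ha hb₀).le (div_le_one_of_le₀ (hx.1.le.trans hx.2) hb₀.le)
          (one_sub_one_div_nonneg hpa)
    _ ≤ (a ^ (1 - 1 / p a) * x ^ (-(1 - 1 / p x))) ^ p x / x := by
        gcongr
        linarith [hp1 x hx']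

theorem one_div_le_one_sub_one_div_of_integral_le (hmono : MonotoneOn p (Ioc 0 1))
    (hp1 : ∀ x ∈ Ioc (0 : ℝ) 1, 1 ≤ p x) {C : ℝ} (hC : 0 < C)
    (hint : ∫ x in Ioc a 1, modularKernel p a x ≤ C) (ha : 0 < a)
    (ha' : a ≤ exp (-(exp 1 * C))) :
    1 / (exp 1 * C * p 1) ≤ 1 - 1 / p a := by
  set T := exp 1 * C
  have hT : 0 < T := by positivity
  have hb : a * exp T ≤ 1 := by
    simpa [← exp_add] using mul_le_mul_of_nonneg_right ha' (exp_pos T).le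
  have hratio : a / (a * exp T) = exp (-T) := by
    rw [exp_neg]
    field_simp
  have hlog : log (a * exp T / a) = T := by
    rw [mul_div_cancel_left₀ _ ha.ne', log_exp]
  have hlower := mul_log_div_le_setIntegral_Ioc ha
    (le_mul_of_one_le_right ha.le (one_le_exp hT.le)) hb (integrableOn_modularKernel hmono hp1 ha)
    (fun x hx => modularKernel_nonneg ha.le (ha.trans hx.1).le)
    (fun x hx => le_modularKernel hmono hp1 ha hb hx)
  rw [hratio, hlog, ← exp_mul] at hlower
  have hexp : exp (-T * ((1 - 1 / p a) * p 1) + 1) ≤ 1 := by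
    rw [exp_add]
    refine le_of_mul_le_mul_right (a := C) ?_ hC
    linarith [show exp (-T * ((1 - 1 / p a) * p 1)) * (exp 1 * C) ≤ C from hlower.trans hint]
  have hP : 0 < p 1 := zero_lt_one.trans_le (hp1 1 ⟨zero_lt_one, le_rfl⟩)
  rw [div_le_iff₀ (by positivity)]
  nlinarith [exp_le_one_iff.1 hexp]

end

/-- Remark after Lemma 3.8: the modular integral condition forces
`p(0⁺) = inf p > 1`. -/
theorem stmt_10 (p : ℝ → ℝ) (C : ℝ)
    (hmono : MonotoneOn p (Set.Ioc 0 1))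
    (hp1 : ∀ x ∈ Set.Ioc (0:ℝ) 1, 1 ≤ p x)
    (hC : 0 < C)
    (hint : ∀ a ∈ Set.Ioo (0:ℝ) 1,
      ∫ x in Set.Ioc a 1,
        (a ^ (1 - 1 / p a) * x ^ (-(1 - 1 / p x))) ^ p x / x ≤ C) :
    1 < sInf (p '' Set.Ioo 0 1) := by
  set a₀ := exp (-(exp 1 * C))
  have ha₀ : a₀ < 1 := exp_lt_one_iff.2 (neg_lt_zero.2 (by positivity))
  have hP : 0 < p 1 := zero_lt_one.trans_le (hp1 1 ⟨zero_lt_one, le_rfl⟩)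
  refine one_lt_csInf_of_le_one_sub_one_div (m := 1 / (exp 1 * C * p 1))
    ⟨_, mem_image_of_mem p (show (1 / 2 : ℝ) ∈ Ioo 0 1 by norm_num)⟩ (by positivity) ?_
  rintro _ ⟨x, hx, rfl⟩
  have hy : min x a₀ ∈ Ioo 0 1 := ⟨lt_min hx.1 (exp_pos _), (min_le_right _ _).trans_lt ha₀⟩
  have hpy : 0 < p (min x a₀) := zero_lt_one.trans_le (hp1 _ (Ioo_subset_Ioc_self hy))
  have hpy_le : p (min x a₀) ≤ p x :=
    hmono (Ioo_subset_Ioc_self hy) (Ioo_subset_Ioc_self hx) (min_le_left _ _)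
  refine ⟨hpy.trans_le hpy_le, ?_⟩
  calc 1 / (exp 1 * C * p 1) ≤ 1 - 1 / p (min x a₀) :=
        one_div_le_one_sub_one_div_of_integral_le hmono hp1 hC (hint _ hy) hy.1 (min_le_right _ _)
    _ ≤ 1 - 1 / p x := one_sub_one_div_le_one_sub_one_div hpy hpy_le
end

section
/- Let p : (0,1) → [1,∞) satisfy: there exist C > 0 and ε > 0 such that t₂^{-1/p'(t₂)+ε} ≤ C t₁^{-1/p'(t₁)+ε} for all 0 < t₁ ≤ t₂ < 1, and suppose p is nondecreasing with 1 < p(0⁺) and p(1) < ∞. Then there is C₂ > 0 such that ∫_a^1 (a^{1/p'(a)} x^{-1/p'(x)})^{p(x)} dx/x ≤ C₂ for all a ∈ (0,1). -/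
open MeasureTheory Set Real

/-- Implication 3)→4) of Theorem 2.2: almost decreasingness of
`x^{-1/p'(x)+ε}` implies the uniform modular integral condition. -/
theorem stmt_11 (p : ℝ → ℝ) (C ε : ℝ)
    (hmono : MonotoneOn p (Set.Ioc 0 1))
    (hp1 : ∀ x ∈ Set.Ioc (0:ℝ) 1, 1 ≤ p x)
    (hp0 : 1 < sInf (p '' Set.Ioo 0 1))
    (hC : 0 < C) (hε : 0 < ε)
    (had : ∀ t₁ t₂ : ℝ, 0 < t₁ → t₁ ≤ t₂ → t₂ < 1 →
      t₂ ^ (-(1 - 1 / p t₂) + ε) ≤ C * t₁ ^ (-(1 - 1 / p t₁) + ε)) :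
    ∃ C₂ > 0, ∀ a ∈ Set.Ioo (0:ℝ) 1,
      ∫ x in Set.Ioc a 1,
        (a ^ (1 - 1 / p a) * x ^ (-(1 - 1 / p x))) ^ p x / x ≤ C₂ := by
  set p0 := sInf (p '' Set.Ioo 0 1) with hp0def
  have hbdd : BddBelow (p '' Set.Ioo 0 1) := by
    refine ⟨1, ?_⟩
    rintro y ⟨x, hx, rfl⟩
    exact hp1 x ⟨hx.1, hx.2.le⟩
  have hp0pos : 0 < p0 := lt_trans one_pos hp0
  have hp0le : ∀ x ∈ Set.Ioo (0:ℝ) 1, p0 ≤ p x := fun x hx => csInf_le hbdd ⟨x, hx, rfl⟩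
  set C' := max C 1 with hC'def
  have hC'1 : (1:ℝ) ≤ C' := le_max_right _ _
  have hCC' : C ≤ C' := le_max_left _ _
  set s := ε * p0 with hsdef
  have hs : 0 < s := mul_pos hε hp0pos
  set K := C' ^ (p 1) with hKdef
  have hK : 0 < K := rpow_pos_of_pos (lt_of_lt_of_le one_pos hC'1) _
  refine ⟨K / s, div_pos hK hs, ?_⟩
  rintro a ⟨ha0, ha1⟩
  set g : ℝ → ℝ := fun x => K * a ^ s * x ^ (-s - 1) with hgdef
  have hgint : IntegrableOn g (Set.Ioc a 1) := by
    have hcont : ContinuousOn g (Set.Icc a 1) := by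
      apply ContinuousOn.mul continuousOn_const
      intro x hx
      exact (Real.continuousAt_rpow_const x _
        (Or.inl (ne_of_gt (lt_of_lt_of_le ha0 hx.1)))).continuousWithinAt
    exact (hcont.integrableOn_Icc).mono_set Set.Ioc_subset_Icc_self
  have hfle : ∀ x ∈ Set.Ioo a 1,
      (a ^ (1 - 1 / p a) * x ^ (-(1 - 1 / p x))) ^ p x / x ≤ g x := by
    intro x hx
    have hx0 : 0 < x := lt_trans ha0 hx.1
    have hxI : x ∈ Set.Ioo (0:ℝ) 1 := ⟨hx0, hx.2⟩
    have hpx1 : 1 ≤ p x := hp1 x ⟨hx0, hx.2.le⟩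
    have hpx0 : 0 ≤ p x := le_trans zero_le_one hpx1
    have hpxle : p x ≤ p 1 := hmono ⟨hx0, hx.2.le⟩ ⟨one_pos, le_refl 1⟩ hx.2.le
    have hp0x : p0 ≤ p x := hp0le x hxI
    have key := had a x ha0 hx.1.le hx.2
    set e1 := 1 - 1 / p a with he1
    set e2 := 1 - 1 / p x with he2
    have hB : a ^ e1 * x ^ (-e2) ≤ C' * (a / x) ^ ε := by
      have h1 : x ^ (-e2) = x ^ (-e2 + ε) * x ^ (-ε) := by
        rw [← Real.rpow_add hx0]; congr 1; ring
      calc a ^ e1 * x ^ (-e2)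
          = (a ^ e1 * x ^ (-ε)) * x ^ (-e2 + ε) := by rw [h1]; ring
        _ ≤ (a ^ e1 * x ^ (-ε)) * (C * a ^ (-e1 + ε)) := by
            refine mul_le_mul_of_nonneg_left key ?_
            positivity
        _ = C * (a ^ e1 * a ^ (-e1 + ε)) * x ^ (-ε) := by ring
        _ = C * a ^ ε * x ^ (-ε) := by
            rw [← Real.rpow_add ha0]
            congr 2
            ring
        _ ≤ C' * a ^ ε * x ^ (-ε) := by
            have : (0:ℝ) ≤ a ^ ε * x ^ (-ε) := by positivity
            nlinarith [Real.rpow_nonneg ha0.le ε, Real.rpow_nonneg hx0.le (-ε)]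
        _ = C' * (a / x) ^ ε := by
            rw [Real.div_rpow ha0.le hx0.le, Real.rpow_neg hx0.le]
            ring
    have hBnn : 0 ≤ a ^ e1 * x ^ (-e2) := by positivity
    have hdiv0 : 0 < a / x := div_pos ha0 hx0
    have hdiv1 : a / x ≤ 1 := (div_le_one hx0).mpr hx.1.le
    have h2 : (a ^ e1 * x ^ (-e2)) ^ p x ≤ K * (a / x) ^ s := by
      calc (a ^ e1 * x ^ (-e2)) ^ p x
          ≤ (C' * (a / x) ^ ε) ^ p x := Real.rpow_le_rpow hBnn hB hpx0
        _ = C' ^ p x * (a / x) ^ (ε * p x) := by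
            rw [Real.mul_rpow (le_trans zero_le_one hC'1) (Real.rpow_nonneg hdiv0.le _),
              ← Real.rpow_mul hdiv0.le]
        _ ≤ K * (a / x) ^ s := by
            refine mul_le_mul (Real.rpow_le_rpow_of_exponent_le hC'1 hpxle)
              (Real.rpow_le_rpow_of_exponent_ge hdiv0 hdiv1
                (mul_le_mul_of_nonneg_left hp0x hε.le))
              (Real.rpow_nonneg hdiv0.le _) hK.le
    have hgx : K * (a / x) ^ s / x = g x := by
      have hxs : x ^ (-s - 1) = (x ^ s * x)⁻¹ := by
        rw [show -s - 1 = -(s + 1) by ring, Real.rpow_neg hx0.le,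
          Real.rpow_add_one hx0.ne']
      have hxsp : (0:ℝ) < x ^ s := Real.rpow_pos_of_pos hx0 _
      rw [hgdef]
      simp only []
      rw [hxs, Real.div_rpow ha0.le hx0.le]
      field_simp
    calc (a ^ e1 * x ^ (-e2)) ^ p x / x
        ≤ K * (a / x) ^ s / x := by
          gcongr
      _ = g x := hgx
  have hae1 : {(1:ℝ)}ᶜ ∈ ae (volume : Measure ℝ) :=
    compl_mem_ae_iff.mpr (measure_singleton 1)
  have hf0 : 0 ≤ᵐ[volume.restrict (Set.Ioc a 1)]
      fun x => (a ^ (1 - 1 / p a) * x ^ (-(1 - 1 / p x))) ^ p x / x := by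
    refine (ae_restrict_iff' measurableSet_Ioc).2 (Filter.Eventually.of_forall ?_)
    intro x hx
    have hx0 : 0 < x := lt_of_lt_of_le ha0 hx.1.le
    have : (0:ℝ) ≤ a ^ (1 - 1 / p a) * x ^ (-(1 - 1 / p x)) := by positivity
    positivity
  have hle : (fun x => (a ^ (1 - 1 / p a) * x ^ (-(1 - 1 / p x))) ^ p x / x)
      ≤ᵐ[volume.restrict (Set.Ioc a 1)] g := by
    refine (ae_restrict_iff' measurableSet_Ioc).2 ?_
    filter_upwards [hae1] with x hx1 hx
    exact hfle x ⟨hx.1, lt_of_le_of_ne hx.2 hx1⟩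
  have hint := integral_mono_of_nonneg hf0 hgint hle
  refine hint.trans ?_
  have hinteg : ∫ x in Set.Ioc a 1, g x = K * a ^ s * ((1 - a ^ (-s)) / (-s)) := by
    have h1 : ∫ x in Set.Ioc a 1, g x = K * a ^ s * ∫ x in Set.Ioc a 1, x ^ (-s - 1) := by
      simp only [hgdef]
      rw [MeasureTheory.integral_const_mul]
    rw [h1]
    congr 1
    rw [← intervalIntegral.integral_of_le ha1.le]
    rw [integral_rpow (Or.inr ⟨fun h => hs.ne' (by linarith),
      Set.notMem_uIcc_of_lt ha0 one_pos⟩)]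
    norm_num
  rw [hinteg]
  have haa : a ^ s * a ^ (-s) = 1 := by
    rw [← Real.rpow_add ha0, add_neg_cancel, Real.rpow_zero]
  have has : (0:ℝ) < a ^ s := Real.rpow_pos_of_pos ha0 _
  have heq : K * a ^ s * ((1 - a ^ (-s)) / (-s)) = K * (1 - a ^ s) / s := by
    rw [Real.rpow_neg ha0.le]
    field_simp
    ring
  rw [heq]
  have h : K * (1 - a ^ s) ≤ K := by nlinarith [hK.le, has]
  gcongr
end

section
/- Let p : (0,1) → [1,∞) be nondecreasing with p(1) < ∞ and p(0⁺) > 1, and suppose there exist ε > 0 and C > 0 such that t₂^{-1/p'(t₂)+ε} ≤ C t₁^{-1/p'(t₁)+ε} for 0 < t₁ ≤ t₂ < 1. Then there is C₂ > 0 such that ‖x^{-1}‖_{L^{p(·)}(a,1)} ≤ C₂ a^{-1/p'(a)} for all a ∈ (0,1). -/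
/-!
Put `λ = C₂ a^{-1/p'(a)}`. The almost-decreasing hypothesis at `a ≤ x` gives
`1/(xλ) ≤ (C/C₂) (a/x)^ε x^{-1/p(x)}`; as the factor `(C/C₂) (a/x)^ε` is at most `1` and
`p(x) ≥ 1`, raising to the power `p(x)` yields `|1/(xλ)|^{p(x)} ≤ (C/C₂) a^ε x^{-1-ε}`, whose
integral over `(a, ∞)` is `C/(C₂ ε)`. With `C₂ = C (1 + 1/ε)` this is `1/(1+ε) ≤ 1`.
-/

open MeasureTheory Set Real

/-- The Luxemburg norm of `f` in the variable exponent space `L^{p(·)}(s)`. -/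
noncomputable def luxNorm (p f : ℝ → ℝ) (s : Set ℝ) : ℝ :=
  sInf {l : ℝ | 0 < l ∧ ∫ x in s, |f x / l| ^ p x ≤ 1}

theorem luxNorm_le_of_integral_le {p f : ℝ → ℝ} {s : Set ℝ} {l : ℝ} (hl : 0 < l)
    (h : ∫ x in s, |f x / l| ^ p x ≤ 1) : luxNorm p f s ≤ l :=
  csInf_le ⟨0, fun _ hm => hm.1.le⟩ ⟨hl, h⟩

theorem setIntegral_Ioo_rpow_neg_one_sub_le {a ε : ℝ} (ha : 0 < a) (hε : 0 < ε) (b : ℝ) :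
    ∫ x in Ioo a b, x ^ (-(1 + ε)) ≤ a ^ (-ε) / ε := by
  have hexp : -(1 + ε) < -1 := by linarith
  calc ∫ x in Ioo a b, x ^ (-(1 + ε)) ≤ ∫ x in Ioi a, x ^ (-(1 + ε)) :=
        setIntegral_mono_set (integrableOn_Ioi_rpow_of_lt hexp ha)
          ((ae_restrict_iff' measurableSet_Ioi).2 <| .of_forall fun x hx =>
            rpow_nonneg (ha.trans hx).le _)
          Ioo_subset_Ioi_self.eventuallyLE
    _ = a ^ (-ε) / ε := by
        rw [integral_Ioi_rpow_of_lt hexp ha, show -(1 + ε) + 1 = -ε by ring, neg_div_neg_eq]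

theorem rpow_le_mul_inv_of_le_mul_rpow {y c x q : ℝ} (hy : 0 ≤ y) (hc₀ : 0 ≤ c) (hc₁ : c ≤ 1)
    (hx : 0 < x) (hq : 1 ≤ q) (h : y ≤ c * x ^ (-(1 / q))) : y ^ q ≤ c * x⁻¹ :=
  calc y ^ q ≤ (c * x ^ (-(1 / q))) ^ q := rpow_le_rpow hy h (by linarith)
    _ = c ^ q * x⁻¹ := by
        rw [mul_rpow hc₀ (rpow_nonneg hx.le _), ← rpow_mul hx.le, neg_mul, one_div,
          inv_mul_cancel₀ (by linarith), rpow_neg_one]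
    _ ≤ c * x⁻¹ := by gcongr; exact rpow_le_self_of_le_one hc₀ hc₁ hq

theorem one_div_mul_le_of_rpow_le {a x q r C D ε : ℝ} (ha : 0 < a) (hax : a ≤ x) (hD : 0 < D)
    (h : x ^ (-(1 - 1 / q) + ε) ≤ C * a ^ (-(1 - 1 / r) + ε)) :
    1 / (x * (D * a ^ (-(1 - 1 / r)))) ≤ C / D * (a / x) ^ ε * x ^ (-(1 / q)) := by
  have hx : 0 < x := ha.trans_le hax
  rw [rpow_add hx, rpow_add ha] at h
  rw [div_rpow ha.le hx.le, div_le_iff₀ (by positivity)]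
  have hcancel : x ^ (-(1 - 1 / q)) * x ^ (-(1 / q)) * x = 1 := by
    rw [← rpow_add hx, ← rpow_add_one hx.ne', show -(1 - 1 / q) + -(1 / q) + 1 = 0 by ring,
      rpow_zero]
  have hxε : 0 < x ^ ε := rpow_pos_of_pos hx ε
  calc (1 : ℝ) = x ^ (-(1 - 1 / q)) * x ^ ε * (x ^ (-(1 / q)) * x / x ^ ε) := by
        field_simp; linear_combination -hcancel
    _ ≤ C * (a ^ (-(1 - 1 / r)) * a ^ ε) * (x ^ (-(1 / q)) * x / x ^ ε) := by gcongr
    _ = _ := by field_simp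

theorem abs_one_div_div_rpow_le {a x q r C D ε : ℝ} (ha : 0 < a) (hax : a ≤ x) (hq : 1 ≤ q)
    (hC : 0 < C) (hCD : C ≤ D) (hε : 0 ≤ ε)
    (h : x ^ (-(1 - 1 / q) + ε) ≤ C * a ^ (-(1 - 1 / r) + ε)) :
    |1 / x / (D * a ^ (-(1 - 1 / r)))| ^ q ≤ C / D * a ^ ε * x ^ (-(1 + ε)) := by
  have hx : 0 < x := ha.trans_le hax
  have hD : 0 < D := hC.trans_le hCD
  have hc₁ : C / D * (a / x) ^ ε ≤ 1 :=
    mul_le_one₀ ((div_le_one hD).2 hCD) (by positivity)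
      (rpow_le_one (by positivity) ((div_le_one hx).2 hax) hε)
  calc |1 / x / (D * a ^ (-(1 - 1 / r)))| ^ q ≤ C / D * (a / x) ^ ε * x⁻¹ := by
        refine rpow_le_mul_inv_of_le_mul_rpow (abs_nonneg _) (by positivity) hc₁ hx hq ?_
        rw [abs_of_pos (by positivity), div_div]
        exact one_div_mul_le_of_rpow_le ha hax hD h
    _ = C / D * a ^ ε * x ^ (-(1 + ε)) := by
        rw [div_rpow ha.le hx.le, neg_add, rpow_add hx, rpow_neg_one, rpow_neg hx.le]
        ring

theorem stmt_16_general (p : ℝ → ℝ) (C ε : ℝ)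
    (hp1 : ∀ x ∈ Set.Ioc (0:ℝ) 1, 1 ≤ p x)
    (hC : 0 < C) (hε : 0 < ε)
    (had : ∀ t₁ t₂ : ℝ, 0 < t₁ → t₁ ≤ t₂ → t₂ < 1 →
      t₂ ^ (-(1 - 1 / p t₂) + ε) ≤ C * t₁ ^ (-(1 - 1 / p t₁) + ε)) :
    ∃ C₂ > 0, ∀ a ∈ Set.Ioo (0:ℝ) 1,
      luxNorm p (fun x => 1 / x) (Set.Ioo a 1) ≤ C₂ * a ^ (-(1 - 1 / p a)) := by
  set C₂ := C * (1 + ε⁻¹)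
  have hCC₂ : C ≤ C₂ := le_mul_of_one_le_right hC.le (by simp [hε.le])
  refine ⟨C₂, by positivity, fun a ⟨ha₀, _⟩ => luxNorm_le_of_integral_le (by positivity) ?_⟩
  have hint : IntegrableOn (fun x : ℝ => x ^ (-(1 + ε))) (Ioo a 1) :=
    (integrableOn_Ioi_rpow_of_lt (by linarith) ha₀).mono_set Ioo_subset_Ioi_self
  calc ∫ x in Ioo a 1, |1 / x / (C₂ * a ^ (-(1 - 1 / p a)))| ^ p x
      ≤ ∫ x in Ioo a 1, C / C₂ * a ^ ε * x ^ (-(1 + ε)) := by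
        refine integral_mono_of_nonneg (.of_forall fun x => by positivity) (hint.const_mul _)
          ((ae_restrict_iff' measurableSet_Ioo).2 <| .of_forall fun x ⟨hax, hx₁⟩ => ?_)
        exact abs_one_div_div_rpow_le ha₀ hax.le (hp1 x ⟨ha₀.trans hax, hx₁.le⟩) hC hCC₂ hε.le
          (had a x ha₀ hax.le hx₁)
    _ ≤ C / C₂ * a ^ ε * (a ^ (-ε) / ε) := by
        rw [integral_const_mul]
        gcongr
        exact setIntegral_Ioo_rpow_neg_one_sub_le ha₀ hε 1
    _ = 1 / (1 + ε) := by
        simp only [C₂, rpow_neg ha₀.le]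
        field_simp
        ring
    _ ≤ 1 := by rw [div_le_one (by linarith)]; linarith

/-- Implication 3)→5) of Theorem 2.2: almost decreasingness of
`x^{-1/p'(x)+ε}` implies the norm condition on `x⁻¹`. -/
theorem stmt_16 (p : ℝ → ℝ) (C ε : ℝ)
    (hmono : MonotoneOn p (Set.Ioc 0 1))
    (hp1 : ∀ x ∈ Set.Ioc (0:ℝ) 1, 1 ≤ p x)
    (hp0 : 1 < sInf (p '' Set.Ioo 0 1))
    (hC : 0 < C) (hε : 0 < ε)
    (had : ∀ t₁ t₂ : ℝ, 0 < t₁ → t₁ ≤ t₂ → t₂ < 1 →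
      t₂ ^ (-(1 - 1 / p t₂) + ε) ≤ C * t₁ ^ (-(1 - 1 / p t₁) + ε)) :
    ∃ C₂ > 0, ∀ a ∈ Set.Ioo (0:ℝ) 1,
      luxNorm p (fun x => 1 / x) (Set.Ioo a 1) ≤ C₂ * a ^ (-(1 - 1 / p a)) :=
  stmt_16_general p C ε hp1 hC hε had
end

section
/- Let p : (0,1) → [1,∞) be nondecreasing with p(1) < ∞. Then the following two conditions are equivalent: (i) there exists C > 0 such that ∫_a^1 x^{-1/p'(x)} dx/x ≤ C a^{-1/p'(a)} for all a ∈ (0,1); (ii) there exist ε > 0 and C₁ > 0 such that t₂^{-1/p'(t₂)+ε} ≤ C₁ t₁^{-1/p'(t₁)+ε} for all 0 < t₁ ≤ t₂ < 1. -/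
/-!
Write `φ(x) = x ^ (-β x)` with `β = 1 - 1 / p = 1 / p'`, which is nondecreasing with values in
`[0, 1]`, and `F(a) = ∫_a^1 φ(x) dx / x`. Because `β` is nondecreasing, `∫_a^{2a} φ(x) dx / x`
is at least `φ(a) / 4`; together with `F ≤ C φ` this gives the geometric decay
`F(2a) ≤ (1 - 1 / (4C)) F(a) ≤ 2 ^ (-ε) F(a)`, so `a ^ ε F(a)` is almost decreasing. Since
`φ ≤ 4 F ≤ 4 C φ` on `(0, 1/2]`, the same holds for `a ^ ε φ(a)` there, and on `[1/2, 1)` this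
function is bounded above and below. Conversely, if `x ^ ε φ(x)` is almost decreasing then
`φ(x) / x ≤ C₁ a ^ ε φ(a) x ^ (-1 - ε)` on `(a, 1)`, which integrates to `(C₁ / ε) φ(a)`.
-/

open MeasureTheory Set Real Filter Topology

namespace Zygmund

theorem exists_pos_lt_two_rpow_neg {θ : ℝ} (hθ : θ < 1) : ∃ ε > (0 : ℝ), θ < (2 : ℝ) ^ (-ε) := by
  have hcont : Tendsto (fun ε : ℝ => (2 : ℝ) ^ (-ε)) (𝓝[>] 0) (𝓝 1) := by
    have : Continuous fun ε : ℝ => (2 : ℝ) ^ (-ε) :=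
      continuous_const.rpow continuous_neg fun _ => Or.inl two_ne_zero
    simpa using this.continuousWithinAt.tendsto (x := 0) (s := Ioi 0)
  obtain ⟨ε, hθε, hε⟩ := ((hcont.eventually (lt_mem_nhds hθ)).and self_mem_nhdsWithin).exists
  exact ⟨ε, hε, hθε⟩

theorem le_rpow_neg_mul_of_doubling {F : ℝ → ℝ} {ε b : ℝ}
    (hdouble : ∀ a, 0 < a → 2 * a ≤ b → F (2 * a) ≤ 2 ^ (-ε) * F a) {t : ℝ} (ht : 0 < t) :
    ∀ k : ℕ, 2 ^ k * t ≤ b → F (2 ^ k * t) ≤ ((2 : ℝ) ^ k) ^ (-ε) * F t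
  | 0, _ => by simp
  | k + 1, hk => by
    have hkt : (2 : ℝ) ^ k * t ≤ 2 ^ (k + 1) * t := by gcongr <;> norm_num
    calc F (2 ^ (k + 1) * t) = F (2 * (2 ^ k * t)) := by ring_nf
      _ ≤ 2 ^ (-ε) * F (2 ^ k * t) :=
        hdouble _ (by positivity) (by rw [← mul_assoc, ← pow_succ']; exact hk)
      _ ≤ 2 ^ (-ε) * (((2 : ℝ) ^ k) ^ (-ε) * F t) :=
        mul_le_mul_of_nonneg_left (le_rpow_neg_mul_of_doubling hdouble ht k (hkt.trans hk))
          (by positivity)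
      _ = ((2 : ℝ) ^ (k + 1)) ^ (-ε) * F t := by
        rw [pow_succ', mul_rpow (by norm_num) (by positivity)]; ring

theorem rpow_mul_le_of_doubling {F : ℝ → ℝ} {ε b : ℝ} (hε : 0 ≤ ε)
    (hF₀ : ∀ t ∈ Ioc 0 b, 0 ≤ F t) (hF : AntitoneOn F (Ioc 0 b))
    (hdouble : ∀ a, 0 < a → 2 * a ≤ b → F (2 * a) ≤ 2 ^ (-ε) * F a)
    {t₁ t₂ : ℝ} (ht₁ : 0 < t₁) (h : t₁ ≤ t₂) (ht₂ : t₂ ≤ b) :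
    t₂ ^ ε * F t₂ ≤ 2 ^ ε * (t₁ ^ ε * F t₁) := by
  obtain ⟨k, hk, hk'⟩ := exists_nat_pow_near ((one_le_div ht₁).2 h) one_lt_two
  have hkt₁ : 2 ^ k * t₁ ≤ t₂ := (le_div_iff₀ ht₁).1 hk
  have hF_le : F t₂ ≤ ((2 : ℝ) ^ k) ^ (-ε) * F t₁ :=
    (hF ⟨by positivity, hkt₁.trans ht₂⟩ ⟨ht₁.trans_le h, ht₂⟩ hkt₁).trans
      (le_rpow_neg_mul_of_doubling hdouble ht₁ k (hkt₁.trans ht₂))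
  have hpow_le : t₂ ^ ε ≤ 2 ^ ε * ((2 : ℝ) ^ k) ^ ε * t₁ ^ ε := by
    rw [← mul_rpow (by norm_num) (by positivity), ← mul_rpow (by positivity) ht₁.le, ← pow_succ']
    exact rpow_le_rpow (ht₁.trans_le h).le ((div_lt_iff₀ ht₁).1 hk').le hε
  calc t₂ ^ ε * F t₂ ≤ (2 ^ ε * ((2 : ℝ) ^ k) ^ ε * t₁ ^ ε) * (((2 : ℝ) ^ k) ^ (-ε) * F t₁) :=
        mul_le_mul hpow_le hF_le (hF₀ t₂ ⟨ht₁.trans_le h, ht₂⟩) (by positivity)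
    _ = 2 ^ ε * (t₁ ^ ε * F t₁) := by
        rw [rpow_neg (by positivity)]
        field_simp

theorem le_mul_of_le_mul_of_mem_Icc {g : ℝ → ℝ} {c b m M K : ℝ} (hc : 0 < c) (hcb : c < b)
    (hm : 0 < m) (hsmall : ∀ t₁ t₂, 0 < t₁ → t₁ ≤ t₂ → t₂ ≤ c → g t₂ ≤ K * g t₁)
    (hbdd : ∀ t ∈ Ico c b, g t ∈ Icc m M) {t₁ t₂ : ℝ} (ht₁ : 0 < t₁) (h : t₁ ≤ t₂)
    (ht₂ : t₂ < b) : g t₂ ≤ M / m * K * g t₁ := by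
  have hgc : g c ∈ Icc m M := hbdd c ⟨le_rfl, hcb⟩
  have hMm : 1 ≤ M / m := (one_le_div hm).2 (hgc.1.trans hgc.2)
  have hK : 1 ≤ K :=
    le_of_mul_le_mul_right (by simpa using hsmall c c hc le_rfl le_rfl) (hm.trans_le hgc.1)
  have hgt₁ : m ≤ K * g t₁ := by
    rcases le_or_gt t₁ c with ht₁c | hct₁
    · exact hgc.1.trans (hsmall t₁ c ht₁ ht₁c le_rfl)
    · have := (hbdd t₁ ⟨hct₁.le, h.trans_lt ht₂⟩).1
      exact this.trans (le_mul_of_one_le_left (hm.le.trans this) hK)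
  rw [mul_assoc]
  rcases le_or_gt t₂ c with ht₂c | hct₂
  · exact (hsmall t₁ t₂ ht₁ h ht₂c).trans (le_mul_of_one_le_left (hm.le.trans hgt₁) hMm)
  · calc g t₂ ≤ M / m * m := by
          rw [div_mul_cancel₀ _ hm.ne']; exact (hbdd t₂ ⟨hct₂.le, ht₂⟩).2
      _ ≤ M / m * (K * g t₁) := by gcongr

theorem rpow_neg_add_mem_Icc {t b ε : ℝ} (ht : t ∈ Icc (1 / 2) 1) (hb : b ∈ Icc 0 1)
    (hε : 0 ≤ ε) : t ^ (-b + ε) ∈ Icc ((1 / 2) ^ ε) 2 := by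
  have ht₀ : 0 < t := by linarith [ht.1]
  constructor
  · calc (1 / 2) ^ ε ≤ t ^ ε := rpow_le_rpow (by norm_num) ht.1 hε
      _ ≤ t ^ (-b + ε) := rpow_le_rpow_of_exponent_ge ht₀ ht.2 (by linarith [hb.1])
  · calc t ^ (-b + ε) ≤ t ^ (-1 : ℝ) := rpow_le_rpow_of_exponent_ge ht₀ ht.2 (by linarith [hb.2])
      _ = t⁻¹ := rpow_neg_one t
      _ ≤ 2 := by rw [inv_le_comm₀ ht₀ two_pos]; linarith [ht.1]

noncomputable def tailIntegral (β : ℝ → ℝ) (a : ℝ) : ℝ := ∫ x in Ioc a 1, x ^ (-β x) / x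

variable {β : ℝ → ℝ}

theorem integrableOn_rpow_neg_div_self {a : ℝ} (ha : 0 < a) (hβm : MonotoneOn β (Ioc a 1))
    (hβ₁ : ∀ x ∈ Ioc a 1, β x ≤ 1) :
    IntegrableOn (fun x => x ^ (-β x) / x) (Ioc a 1) := by
  have hmeas : AEMeasurable (fun x => x ^ (-β x) / x) (volume.restrict (Ioc a 1)) :=
    (aemeasurable_id.pow (aemeasurable_restrict_of_monotoneOn measurableSet_Ioc hβm).neg).div
      aemeasurable_id
  refine .of_bound measure_Ioc_lt_top hmeas.aestronglyMeasurable (a⁻¹ / a)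
    ((ae_restrict_iff' measurableSet_Ioc).2 (ae_of_all _ ?_))
  intro x ⟨hax, hx₁⟩
  have hx : 0 < x := ha.trans hax
  rw [norm_of_nonneg (div_nonneg (rpow_nonneg hx.le _) hx.le)]
  have hpow : x ^ (-β x) ≤ a⁻¹ := by
    calc x ^ (-β x) ≤ x ^ (-1 : ℝ) :=
          rpow_le_rpow_of_exponent_ge hx hx₁ (by linarith [hβ₁ x ⟨hax, hx₁⟩])
      _ = x⁻¹ := rpow_neg_one x
      _ ≤ a⁻¹ := inv_anti₀ ha hax.le
  gcongr

theorem integrableOn_tail (hβm : MonotoneOn β (Ioc 0 1)) (hβ : MapsTo β (Ioc 0 1) (Icc 0 1))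
    {a : ℝ} (ha : 0 < a) : IntegrableOn (fun x => x ^ (-β x) / x) (Ioc a 1) :=
  have hsub : Ioc a 1 ⊆ Ioc 0 1 := Ioc_subset_Ioc_left ha.le
  integrableOn_rpow_neg_div_self ha (hβm.mono hsub) fun _ hx => (hβ (hsub hx)).2

theorem rpow_neg_le_four_mul_integral (hβm : MonotoneOn β (Ioc 0 1))
    (hβ : MapsTo β (Ioc 0 1) (Icc 0 1)) {a : ℝ} (ha : 0 < a) (h2a : 2 * a ≤ 1) :
    a ^ (-β a) ≤ 4 * ∫ x in Ioc a (2 * a), x ^ (-β x) / x := by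
  have ha₁ : a ∈ Ioc 0 1 := ⟨ha, by linarith⟩
  obtain ⟨hβa₀, hβa₁⟩ := hβ ha₁
  have hpt : ∀ x ∈ Ioc a (2 * a), (2 * a) ^ (-β a - 1) ≤ x ^ (-β x) / x := by
    intro x ⟨hax, hx2a⟩
    have hx : 0 < x := ha.trans hax
    have hβx : β a ≤ β x := hβm ha₁ ⟨hx, hx2a.trans h2a⟩ hax.le
    calc (2 * a) ^ (-β a - 1) ≤ x ^ (-β a - 1) := rpow_le_rpow_of_nonpos hx hx2a (by linarith)
      _ ≤ x ^ (-β x - 1) := rpow_le_rpow_of_exponent_ge hx (hx2a.trans h2a) (by linarith)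
      _ = x ^ (-β x) / x := rpow_sub_one hx.ne' _
  have hint : a * (2 * a) ^ (-β a - 1) ≤ ∫ x in Ioc a (2 * a), x ^ (-β x) / x := by
    calc a * (2 * a) ^ (-β a - 1) = ∫ _ in Ioc a (2 * a), (2 * a) ^ (-β a - 1) := by
          rw [setIntegral_const, volume_real_Ioc_of_le (by linarith), smul_eq_mul]; ring
      _ ≤ _ := setIntegral_mono_on (integrableOn_const measure_Ioc_lt_top.ne)
          ((integrableOn_tail hβm hβ ha).mono_set (Ioc_subset_Ioc_right h2a)) measurableSet_Ioc hpt
  have hfour : (1 / 4 : ℝ) ≤ 2 ^ (-β a - 1) := by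
    calc (1 / 4 : ℝ) = 2 ^ (-2 : ℝ) := by norm_num [rpow_neg]
      _ ≤ 2 ^ (-β a - 1) := rpow_le_rpow_of_exponent_le one_le_two (by linarith)
  have hscale : a * (2 * a) ^ (-β a - 1) = 2 ^ (-β a - 1) * a ^ (-β a) := by
    rw [mul_rpow zero_le_two ha.le, rpow_sub_one ha.ne']; field_simp
  nlinarith [rpow_nonneg ha.le (-β a)]

theorem tailIntegral_nonneg (β : ℝ → ℝ) {a : ℝ} (ha : 0 ≤ a) : 0 ≤ tailIntegral β a :=
  setIntegral_nonneg measurableSet_Ioc fun x hx =>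
    have hx : 0 < x := ha.trans_lt hx.1
    div_nonneg (rpow_nonneg hx.le _) hx.le

theorem tailIntegral_eq_add (hβm : MonotoneOn β (Ioc 0 1)) (hβ : MapsTo β (Ioc 0 1) (Icc 0 1))
    {a b : ℝ} (ha : 0 < a) (hab : a ≤ b) (hb : b ≤ 1) :
    tailIntegral β a = (∫ x in Ioc a b, x ^ (-β x) / x) + tailIntegral β b := by
  have hint := integrableOn_tail hβm hβ ha
  rw [tailIntegral, ← Ioc_union_Ioc_eq_Ioc hab hb]
  exact setIntegral_union (Ioc_disjoint_Ioc_of_le le_rfl) measurableSet_Ioc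
    (hint.mono_set (Ioc_subset_Ioc_right hb)) (hint.mono_set (Ioc_subset_Ioc_left hab))

theorem antitoneOn_tailIntegral (hβm : MonotoneOn β (Ioc 0 1))
    (hβ : MapsTo β (Ioc 0 1) (Icc 0 1)) : AntitoneOn (tailIntegral β) (Ioc 0 1) := by
  intro a ha b hb hab
  rw [tailIntegral_eq_add hβm hβ ha.1 hab hb.2]
  have : 0 ≤ ∫ x in Ioc a b, x ^ (-β x) / x :=
    setIntegral_nonneg measurableSet_Ioc fun x hx =>
      div_nonneg (rpow_nonneg (ha.1.trans hx.1).le _) (ha.1.trans hx.1).le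
  linarith

theorem rpow_neg_le_four_mul_tailIntegral (hβm : MonotoneOn β (Ioc 0 1))
    (hβ : MapsTo β (Ioc 0 1) (Icc 0 1)) {a : ℝ} (ha : 0 < a) (h2a : 2 * a ≤ 1) :
    a ^ (-β a) ≤ 4 * tailIntegral β a := by
  rw [tailIntegral_eq_add hβm hβ ha (b := 2 * a) (by linarith) h2a]
  linarith [rpow_neg_le_four_mul_integral hβm hβ ha h2a,
    tailIntegral_nonneg β (by linarith : 0 ≤ 2 * a)]

theorem tailIntegral_two_mul_le (hβm : MonotoneOn β (Ioc 0 1))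
    (hβ : MapsTo β (Ioc 0 1) (Icc 0 1)) {C : ℝ} (hC₀ : 0 < C)
    (hC : ∀ a ∈ Ioo 0 1, tailIntegral β a ≤ C * a ^ (-β a)) {a : ℝ} (ha : 0 < a)
    (h2a : 2 * a ≤ 1) : tailIntegral β (2 * a) ≤ (1 - 1 / (4 * C)) * tailIntegral β a := by
  have hsplit := tailIntegral_eq_add hβm hβ ha (by linarith) h2a
  have hlow := rpow_neg_le_four_mul_integral hβm hβ ha h2a
  have hup := hC a ⟨ha, by linarith⟩
  have hgain : tailIntegral β a / (4 * C) ≤ ∫ x in Ioc a (2 * a), x ^ (-β x) / x := by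
    rw [div_le_iff₀ (by positivity)]; nlinarith
  rw [sub_mul, one_div_mul_eq_div]
  linarith

theorem exists_rpow_add_le_of_tailIntegral_le (hβm : MonotoneOn β (Ioc 0 1))
    (hβ : MapsTo β (Ioc 0 1) (Icc 0 1)) {C : ℝ} (hC₀ : 0 < C)
    (hC : ∀ a ∈ Ioo 0 1, tailIntegral β a ≤ C * a ^ (-β a)) :
    ∃ ε > (0 : ℝ), ∃ C₁ > (0 : ℝ), ∀ t₁ t₂ : ℝ, 0 < t₁ → t₁ ≤ t₂ → t₂ < 1 →
      t₂ ^ (-β t₂ + ε) ≤ C₁ * t₁ ^ (-β t₁ + ε) := by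
  obtain ⟨ε, hε, hθ⟩ := exists_pos_lt_two_rpow_neg (θ := 1 - 1 / (4 * C)) (by
    have : 0 < 1 / (4 * C) := by positivity
    linarith)
  have hdouble (a : ℝ) (ha : 0 < a) (h2a : 2 * a ≤ 1) :
      tailIntegral β (2 * a) ≤ 2 ^ (-ε) * tailIntegral β a :=
    (tailIntegral_two_mul_le hβm hβ hC₀ hC ha h2a).trans
      (mul_le_mul_of_nonneg_right hθ.le (tailIntegral_nonneg β ha.le))
  have hsmall (t₁ t₂ : ℝ) (ht₁ : 0 < t₁) (h : t₁ ≤ t₂) (ht₂ : t₂ ≤ 1 / 2) :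
      t₂ ^ (-β t₂ + ε) ≤ 4 * 2 ^ ε * C * t₁ ^ (-β t₁ + ε) := by
    have ht₂₀ : 0 < t₂ := ht₁.trans_le h
    rw [rpow_add ht₂₀, rpow_add ht₁]
    calc t₂ ^ (-β t₂) * t₂ ^ ε ≤ (4 * tailIntegral β t₂) * t₂ ^ ε := by
          gcongr
          exact rpow_neg_le_four_mul_tailIntegral hβm hβ ht₂₀ (by linarith)
      _ = 4 * (t₂ ^ ε * tailIntegral β t₂) := by ring
      _ ≤ 4 * (2 ^ ε * (t₁ ^ ε * tailIntegral β t₁)) := by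
          gcongr 4 * ?_
          exact rpow_mul_le_of_doubling hε.le (fun t ht => tailIntegral_nonneg β ht.1.le)
            (antitoneOn_tailIntegral hβm hβ) hdouble ht₁ h (by linarith)
      _ ≤ 4 * (2 ^ ε * (t₁ ^ ε * (C * t₁ ^ (-β t₁)))) := by
          gcongr
          exact hC t₁ ⟨ht₁, by linarith⟩
      _ = 4 * 2 ^ ε * C * (t₁ ^ (-β t₁) * t₁ ^ ε) := by ring
  have hlarge (t : ℝ) (ht : t ∈ Ico (1 / 2) 1) : t ^ (-β t + ε) ∈ Icc ((1 / 2) ^ ε) 2 :=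
    rpow_neg_add_mem_Icc (Ico_subset_Icc_self ht) (hβ ⟨by linarith [ht.1], ht.2.le⟩) hε.le
  exact ⟨ε, hε, 2 / (1 / 2) ^ ε * (4 * 2 ^ ε * C), by positivity, fun t₁ t₂ ht₁ h ht₂ =>
    le_mul_of_le_mul_of_mem_Icc (by norm_num) (by norm_num) (by positivity) hsmall hlarge ht₁ h ht₂⟩

theorem tailIntegral_le_of_rpow_add_le {ε C₁ : ℝ} (hε : 0 < ε)
    (h : ∀ t₁ t₂ : ℝ, 0 < t₁ → t₁ ≤ t₂ → t₂ < 1 → t₂ ^ (-β t₂ + ε) ≤ C₁ * t₁ ^ (-β t₁ + ε))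
    {a : ℝ} (ha : a ∈ Ioo 0 1) : tailIntegral β a ≤ C₁ / ε * a ^ (-β a) := by
  obtain ⟨ha₀, ha₁⟩ := ha
  set K := C₁ * a ^ (-β a + ε)
  have hK : 0 ≤ K := (rpow_nonneg ha₀.le _).trans (h a a ha₀ le_rfl ha₁)
  have hpt : ∀ x ∈ Ioo a 1, x ^ (-β x) / x ≤ K * x ^ (-ε - 1) := by
    intro x ⟨hax, hx₁⟩
    have hx : 0 < x := ha₀.trans hax
    calc x ^ (-β x) / x = x ^ (-β x + ε) * x ^ (-ε - 1) := by
          rw [← rpow_add hx, ← rpow_sub_one hx.ne']; ring_nf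
      _ ≤ K * x ^ (-ε - 1) := by gcongr; exact h a x ha₀ hax.le hx₁
  have h0 : (0 : ℝ) ∉ uIcc a 1 := notMem_uIcc_of_lt ha₀ one_pos
  have hint : IntegrableOn (fun x => K * x ^ (-ε - 1)) (Ioo a 1) :=
    ((intervalIntegrable_iff_integrableOn_Ioo_of_le ha₁.le).1
      (intervalIntegral.intervalIntegrable_rpow (Or.inr h0))).const_mul K
  have hpow : ∫ x in Ioo a 1, x ^ (-ε - 1) = (a ^ (-ε) - 1) / ε := by
    rw [← integral_Ioc_eq_integral_Ioo, ← intervalIntegral.integral_of_le ha₁.le,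
      integral_rpow (Or.inr ⟨by linarith, h0⟩),
      show -ε - 1 + 1 = -ε by ring, one_rpow]
    field_simp
    ring
  calc tailIntegral β a = ∫ x in Ioo a 1, x ^ (-β x) / x := integral_Ioc_eq_integral_Ioo
    _ ≤ ∫ x in Ioo a 1, K * x ^ (-ε - 1) :=
        integral_mono_of_nonneg ((ae_restrict_iff' measurableSet_Ioo).2 (ae_of_all _ fun x hx =>
          div_nonneg (rpow_nonneg (ha₀.trans hx.1).le _) (ha₀.trans hx.1).le)) hint
          ((ae_restrict_iff' measurableSet_Ioo).2 (ae_of_all _ hpt))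
    _ = K * ((a ^ (-ε) - 1) / ε) := by rw [integral_const_mul, hpow]
    _ ≤ K * (a ^ (-ε) / ε) := by gcongr; linarith
    _ = C₁ / ε * a ^ (-β a) := by
        rw [mul_div_assoc', mul_assoc, ← rpow_add ha₀]; ring_nf

end Zygmund

/-- Equivalence of conditions 2) and 3) of Theorem 2.2: the Zygmund-type
integral condition for `x^{-1/p'(x)}` holds iff `x^{-1/p'(x)+ε}` is almost
decreasing for some `ε > 0`. -/
theorem stmt_19 (p : ℝ → ℝ)
    (hmono : MonotoneOn p (Set.Ioc 0 1))
    (hp1 : ∀ x ∈ Set.Ioc (0:ℝ) 1, 1 ≤ p x) :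
    (∃ C > 0, ∀ a ∈ Set.Ioo (0:ℝ) 1,
      ∫ x in Set.Ioc a 1, x ^ (-(1 - 1 / p x)) / x ≤ C * a ^ (-(1 - 1 / p a)))
    ↔
    (∃ ε > 0, ∃ C₁ > 0, ∀ t₁ t₂ : ℝ, 0 < t₁ → t₁ ≤ t₂ → t₂ < 1 →
      t₂ ^ (-(1 - 1 / p t₂) + ε) ≤ C₁ * t₁ ^ (-(1 - 1 / p t₁) + ε)) := by
  have hβm : MonotoneOn (fun x => 1 - 1 / p x) (Ioc 0 1) := fun x hx y hy hxy =>
    sub_le_sub_left (one_div_le_one_div_of_le (one_pos.trans_le (hp1 x hx)) (hmono hx hy hxy)) 1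
  have hβ : MapsTo (fun x => 1 - 1 / p x) (Ioc 0 1) (Icc 0 1) := fun x hx => by
    have hpx := hp1 x hx
    have : 1 / p x ≤ 1 := (div_le_one (one_pos.trans_le hpx)).2 hpx
    exact ⟨by linarith, by linarith [one_div_nonneg.2 (zero_le_one.trans hpx)]⟩
  constructor
  · rintro ⟨C, hC₀, hC⟩
    exact Zygmund.exists_rpow_add_le_of_tailIntegral_le hβm hβ hC₀ hC
  · rintro ⟨ε, hε, C₁, hC₁, h⟩
    exact ⟨C₁ / ε, by positivity, fun a ha => Zygmund.tailIntegral_le_of_rpow_add_le hε h ha⟩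
end
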